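/- arXiv:1106.0339 — 7 statements merged into one kernel-verified Lean document; each statement's English description precedes it below -/
import Mathlib

section
/- Let T be a bounded linear operator on a Banach space X that is an (m,p)-isometry. If for every x ∈ X there exists a real number C(x) > 0 such that ‖Tⁿx‖ ≤ C(x) for all n ∈ ℕ, then T is an isometry, i.e. ‖Tx‖ = ‖x‖ for all x ∈ X. -/
/-- `T` is an `(m,p)`-isometry: `∑_{k=0}^{m} (-1)^k (m choose k) ‖T^k x‖^p = 0` for all `x`. -/
def IsMPIsometry {𝕜 X : Type*} [RCLike 𝕜] [NormedAddCommGroup X] [NormedSpace 𝕜 X]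
    (T : X →L[𝕜] X) (m : ℕ) (p : ℝ) : Prop :=
  ∀ x : X, ∑ k ∈ Finset.range (m + 1), (-1 : ℝ) ^ k * (m.choose k : ℝ) * ‖(T ^ k) x‖ ^ p = 0

/-- A bounded real sequence whose `m`-th finite difference vanishes is constant. -/
lemma diff_const_aux (m : ℕ) : ∀ g : ℕ → ℝ,
    (∀ n, ∑ k ∈ Finset.range (m + 1), (-1:ℝ) ^ k * (m.choose k : ℝ) * g (n + k) = 0) →
    (∃ C : ℝ, ∀ n, |g n| ≤ C) → ∀ n, g n = g 0 := by
  induction m with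
  | zero =>
    intro g hg _ n
    have h0 := hg n
    have h1 := hg 0
    simp at h0 h1
    rw [h0, h1]
  | succ m ih =>
    intro g hg hb n
    set h : ℕ → ℝ := fun n => g (n + 1) - g n with hh
    have hrel : ∀ n, ∑ k ∈ Finset.range (m + 1), (-1:ℝ) ^ k * (m.choose k : ℝ) * h (n + k) = 0 := by
      intro n
      have hS := hg n
      have key : ∑ k ∈ Finset.range (m + 2), (-1:ℝ) ^ k * ((m+1).choose k : ℝ) * g (n + k)
          = ∑ k ∈ Finset.range (m + 1), (-1:ℝ) ^ k * (m.choose k : ℝ) * g (n + k)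
            - ∑ k ∈ Finset.range (m + 1), (-1:ℝ) ^ k * (m.choose k : ℝ) * g (n + 1 + k) := by
        rw [Finset.sum_range_succ' (fun k => (-1:ℝ) ^ k * ((m+1).choose k : ℝ) * g (n + k)) (m+1)]
        rw [Finset.sum_range_succ' (fun k => (-1:ℝ) ^ k * (m.choose k : ℝ) * g (n + k)) m]
        have e1 : ∀ k, ((m+1).choose (k+1) : ℝ) = (m.choose k : ℝ) + (m.choose (k+1) : ℝ) := by
          intro k
          rw [Nat.choose_succ_succ]
          push_cast
          ring
        have e2 : ∑ k ∈ Finset.range (m + 1), (-1:ℝ) ^ (k+1) * ((m+1).choose (k+1) : ℝ) * g (n + (k+1))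
            = (∑ k ∈ Finset.range (m + 1), (-1:ℝ) ^ (k+1) * (m.choose k : ℝ) * g (n + (k+1)))
              + ∑ k ∈ Finset.range (m + 1), (-1:ℝ) ^ (k+1) * (m.choose (k+1) : ℝ) * g (n + (k+1)) := by
          rw [← Finset.sum_add_distrib]
          apply Finset.sum_congr rfl
          intro k _
          rw [e1]; ring
        have e3 : ∑ k ∈ Finset.range (m + 1), (-1:ℝ) ^ (k+1) * (m.choose (k+1) : ℝ) * g (n + (k+1))
            = ∑ k ∈ Finset.range m, (-1:ℝ) ^ (k+1) * (m.choose (k+1) : ℝ) * g (n + (k+1)) := by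
          rw [Finset.sum_range_succ]
          simp [Nat.choose_succ_self]
        have e4 : ∑ k ∈ Finset.range (m + 1), (-1:ℝ) ^ (k+1) * (m.choose k : ℝ) * g (n + (k+1))
            = - ∑ k ∈ Finset.range (m + 1), (-1:ℝ) ^ k * (m.choose k : ℝ) * g (n + 1 + k) := by
          rw [← Finset.sum_neg_distrib]
          apply Finset.sum_congr rfl
          intro k _
          have : n + (k + 1) = n + 1 + k := by ring
          rw [this]; ring
        rw [e2, e3, e4]
        simp
        ring
      have lhs : ∑ k ∈ Finset.range (m + 1), (-1:ℝ) ^ k * (m.choose k : ℝ) * h (n + k)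
          = ∑ k ∈ Finset.range (m + 1), (-1:ℝ) ^ k * (m.choose k : ℝ) * g (n + 1 + k)
            - ∑ k ∈ Finset.range (m + 1), (-1:ℝ) ^ k * (m.choose k : ℝ) * g (n + k) := by
        rw [← Finset.sum_sub_distrib]
        apply Finset.sum_congr rfl
        intro k _
        have : n + 1 + k = n + k + 1 := by ring
        rw [this, hh]; ring
      rw [lhs]
      have := key
      linarith
    obtain ⟨C, hC⟩ := hb
    have hbh : ∃ C : ℝ, ∀ n, |h n| ≤ C := by
      refine ⟨2 * C, fun n => ?_⟩
      calc |h n| ≤ |g (n+1)| + |g n| := abs_sub _ _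
        _ ≤ C + C := add_le_add (hC _) (hC _)
        _ = 2 * C := by ring
    have hconst := ih h hrel hbh
    have hc0 : h 0 = 0 := by
      by_contra hne
      obtain ⟨N, hN⟩ := exists_nat_gt ((C + |g 0|) / |h 0|)
      have hgn : ∀ k : ℕ, g k = g 0 + k * h 0 := by
        intro k
        induction k with
        | zero => simp
        | succ k ihk =>
          have := hconst k
          have : g (k + 1) = g k + h 0 := by rw [← this]; simp [hh]
          rw [this, ihk]; push_cast; ring
      have h1 : (N : ℝ) * |h 0| ≤ C + |g 0| := by
        have := hC N
        rw [hgn N] at this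
        have h2 : |(N : ℝ) * h 0| ≤ C + |g 0| := by
          calc |(N : ℝ) * h 0| = |g 0 + N * h 0 - g 0| := by ring_nf
            _ ≤ |g 0 + N * h 0| + |g 0| := abs_sub _ _
            _ ≤ C + |g 0| := add_le_add this le_rfl
        rwa [abs_mul, Nat.abs_cast] at h2
      have h3 : (N : ℝ) > (C + |g 0|) / |h 0| := hN
      have h4 : (C + |g 0|) / |h 0| * |h 0| < (N:ℝ) * |h 0| :=
        mul_lt_mul_of_pos_right h3 (abs_pos.mpr hne)
      rw [div_mul_cancel₀ _ (ne_of_gt (abs_pos.mpr hne))] at h4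
      linarith
    have hstep : ∀ k, g (k + 1) = g k := by
      intro k
      have := hconst k
      rw [hc0] at this
      have : g (k + 1) - g k = 0 := this
      linarith
    induction n with
    | zero => rfl
    | succ k ihk => rw [hstep k, ihk]

theorem stmt_0 {𝕜 X : Type*} [RCLike 𝕜] [NormedAddCommGroup X] [NormedSpace 𝕜 X]
    [CompleteSpace X] (T : X →L[𝕜] X) (m : ℕ) (hm : 1 ≤ m) (p : ℝ) (hp : 0 < p)
    (hT : IsMPIsometry T m p)
    (hbdd : ∀ x : X, ∃ C : ℝ, 0 < C ∧ ∀ n : ℕ, ‖(T ^ n) x‖ ≤ C) :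
    ∀ x : X, ‖T x‖ = ‖x‖ := by
  intro x
  set g : ℕ → ℝ := fun n => ‖(T ^ n) x‖ ^ p with hg
  have hrel : ∀ n, ∑ k ∈ Finset.range (m + 1), (-1:ℝ) ^ k * (m.choose k : ℝ) * g (n + k) = 0 := by
    intro n
    have := hT ((T ^ n) x)
    rw [← this]
    apply Finset.sum_congr rfl
    intro k _
    have : (T ^ (n + k)) x = (T ^ k) ((T ^ n) x) := by
      rw [add_comm, pow_add, ContinuousLinearMap.mul_apply]
    simp only [hg, this]
  obtain ⟨C, hCpos, hC⟩ := hbdd x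
  have hb : ∃ C : ℝ, ∀ n, |g n| ≤ C := by
    refine ⟨C ^ p, fun n => ?_⟩
    rw [abs_of_nonneg (Real.rpow_nonneg (norm_nonneg _) p)]
    exact Real.rpow_le_rpow (norm_nonneg _) (hC n) hp.le
  have h1 := diff_const_aux m g hrel hb 1
  have h1' : ‖T x‖ ^ p = ‖x‖ ^ p := by simpa [hg] using h1
  have := congrArg (fun y : ℝ => y ^ p⁻¹) h1'
  simpa [Real.rpow_rpow_inv (norm_nonneg _) hp.ne'] using this
end

section
/- Let T be a bounded linear operator on a Banach space X that is an invertible (m,p)-isometry with m even (m ≥ 2). Then T is an (m-1,p)-isometry. -/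
open Finset fwdDiff

private lemma neg_one_pow_sub_even (m k : ℕ) (hk : k ≤ m) (hm : Even m) :
    (-1 : ℝ) ^ (m - k) = (-1) ^ k := by
  rcases Nat.even_or_odd k with h | h
  · rw [h.neg_one_pow, ((Nat.even_sub hk).2 (by simp [hm, h])).neg_one_pow]
  · have : Odd (m - k) := by
      rw [Nat.even_iff] at hm; rw [Nat.odd_iff] at h ⊢; omega
    rw [h.neg_one_pow, this.neg_one_pow]

private lemma neg_one_pow_sub_odd (m k : ℕ) (hk : k ≤ m) (hm : Odd m) :
    (-1 : ℝ) ^ (m - k) = -(-1) ^ k := by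
  rcases Nat.even_or_odd k with h | h
  · have : Odd (m - k) := by
      rw [Nat.odd_iff] at hm ⊢; rw [Nat.even_iff] at h; omega
    rw [h.neg_one_pow, this.neg_one_pow]
  · have : Even (m - k) := by
      rw [Nat.odd_iff] at hm h; rw [Nat.even_iff]; omega
    rw [h.neg_one_pow, this.neg_one_pow, neg_neg]

private lemma pow_mul_invpow {G : Type*} [Group G] (u : G) {k m : ℕ} (h : k ≤ m) :
    u ^ k * u⁻¹ ^ m = u⁻¹ ^ (m - k) := by
  have h2 : u⁻¹ ^ m = u⁻¹ ^ k * u⁻¹ ^ (m - k) := by rw [← pow_add]; congr 1; omega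
  rw [h2, ← mul_assoc, inv_pow, mul_inv_cancel, one_mul]

private lemma descend (g : ℕ → ℝ) (ε : ℝ) (hε : 0 < ε) (N : ℕ)
    (h : ∀ n, N ≤ n → g (n + 1) - g n ≤ -ε) (C : ℝ) :
    ∃ M, ∀ n, M ≤ n → g n ≤ C := by
  have step : ∀ k : ℕ, g (N + k) ≤ g N - ε * k := by
    intro k
    induction k with
    | zero => simp
    | succ k ih =>
      have h1 := h (N + k) (Nat.le_add_right _ _)
      have : N + (k + 1) = (N + k) + 1 := by omega
      rw [this]
      push_cast
      linarith
  obtain ⟨k, hk⟩ := exists_nat_gt ((g N - C) / ε)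
  refine ⟨N + k, fun n hn => ?_⟩
  have h1 : g n ≤ g N - ε * (n - N : ℕ) := by
    have he : n = N + (n - N) := by omega
    calc g n = g (N + (n - N)) := by rw [← he]
    _ ≤ g N - ε * ((n - N : ℕ) : ℝ) := step _
  have hkn : (k : ℝ) ≤ ((n - N : ℕ) : ℝ) := by exact_mod_cast (by omega : k ≤ n - N)
  have h2 : (g N - C) / ε < ((n - N : ℕ) : ℝ) := lt_of_lt_of_le hk hkn
  rw [div_lt_iff₀ hε] at h2
  nlinarith

private lemma key_nonneg (m : ℕ) (hm : 1 ≤ m) (F : ℕ → ℝ) (hF : ∀ n, 0 ≤ F n)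
    (hΔ : ∀ n, (fwdDiff 1)^[m] F n = 0) : 0 ≤ (fwdDiff 1)^[m - 1] F 0 := by
  set c := (fwdDiff 1)^[m - 1] F 0 with hc
  have hstep : ∀ j n, (fwdDiff 1)^[j + 1] F n = (fwdDiff 1)^[j] F (n + 1) - (fwdDiff 1)^[j] F n := by
    intro j n
    rw [Function.iterate_succ_apply']
    rfl
  have hconst : ∀ n, (fwdDiff 1)^[m - 1] F n = c := by
    intro n
    induction n with
    | zero => rfl
    | succ n ih =>
      have h0 := hΔ n
      rw [show m = (m - 1) + 1 by omega, hstep] at h0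
      linarith
  by_contra hcneg
  push_neg at hcneg
  have main : ∀ i, i ≤ m - 1 → ∃ N ε, 0 < ε ∧ ∀ n, N ≤ n → (fwdDiff 1)^[m - 1 - i] F n ≤ -ε := by
    intro i
    induction i with
    | zero =>
      intro _
      exact ⟨0, -c, by linarith, fun n _ => by
        simp only [Nat.sub_zero]; rw [hconst n]; linarith⟩
    | succ i ih =>
      intro hi1
      obtain ⟨N, ε, hε, hN⟩ := ih (by omega)
      have hdiff : ∀ n, N ≤ n →
          ((fwdDiff 1)^[m - 1 - (i + 1)] F) (n + 1) - ((fwdDiff 1)^[m - 1 - (i + 1)] F) n ≤ -ε := by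
        intro n hn
        have h1 := hN n hn
        rw [show m - 1 - i = (m - 1 - (i + 1)) + 1 by omega, hstep] at h1
        linarith
      obtain ⟨M, hM⟩ := descend _ ε hε N hdiff (-1)
      exact ⟨M, 1, one_pos, hM⟩
  obtain ⟨N, ε, hε, hN⟩ := main (m - 1) le_rfl
  have h1 := hN N le_rfl
  rw [Nat.sub_self] at h1
  simp only [Function.iterate_zero, id_eq] at h1
  linarith [hF N]

private lemma iter_eq_sum (F : ℕ → ℝ) (j n : ℕ) :
    (fwdDiff 1)^[j] F n = ∑ k ∈ Finset.range (j + 1), (-1 : ℝ) ^ (j - k) * (j.choose k : ℝ) * F (n + k) := by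
  rw [fwdDiff_iter_eq_sum_shift]
  refine Finset.sum_congr rfl fun k _ => ?_
  have : n + k • 1 = n + k := by simp
  rw [this]
  push_cast [zsmul_eq_mul]
  ring

private lemma key2 {𝕜 X : Type*} [RCLike 𝕜] [NormedAddCommGroup X] [NormedSpace 𝕜 X]
    (T : X →L[𝕜] X) (m : ℕ) (hm : 2 ≤ m) (hmeven : Even m)
    (p : ℝ) (hT : IsMPIsometry T m p) (x : X) :
    ∑ k ∈ Finset.range m, (-1 : ℝ) ^ k * ((m - 1).choose k : ℝ) * ‖(T ^ k) x‖ ^ p ≤ 0 := by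
  set F : ℕ → ℝ := fun n => ‖(T ^ n) x‖ ^ p with hFdef
  have hF : ∀ n, 0 ≤ F n := fun n => Real.rpow_nonneg (norm_nonneg _) p
  have hΔ : ∀ n, (fwdDiff 1)^[m] F n = 0 := by
    intro n
    rw [iter_eq_sum, ← hT ((T ^ n) x)]
    refine Finset.sum_congr rfl fun k hk => ?_
    rw [Finset.mem_range] at hk
    rw [neg_one_pow_sub_even m k (by omega) hmeven]
    congr 2
    simp only [hFdef]
    rw [add_comm n k, pow_add, ContinuousLinearMap.mul_apply]
  have h0 := key_nonneg m (by omega) F hF hΔ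
  rw [iter_eq_sum] at h0
  rw [show m - 1 + 1 = m by omega] at h0
  have hodd : Odd (m - 1) := by
    rw [Nat.even_iff] at hmeven; rw [Nat.odd_iff]; omega
  have heq : ∑ k ∈ Finset.range m, (-1 : ℝ) ^ (m - 1 - k) * ((m - 1).choose k : ℝ) * F (0 + k)
      = -∑ k ∈ Finset.range m, (-1 : ℝ) ^ k * ((m - 1).choose k : ℝ) * ‖(T ^ k) x‖ ^ p := by
    rw [← Finset.sum_neg_distrib]
    refine Finset.sum_congr rfl fun k hk => ?_
    rw [Finset.mem_range] at hk
    rw [neg_one_pow_sub_odd (m - 1) k (by omega) hodd]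
    simp only [hFdef, zero_add]
    ring
  rw [heq] at h0
  linarith

theorem stmt_1 {𝕜 X : Type*} [RCLike 𝕜] [NormedAddCommGroup X] [NormedSpace 𝕜 X]
    [CompleteSpace X] (T : X →L[𝕜] X) (m : ℕ) (hm : 2 ≤ m) (hmeven : Even m)
    (p : ℝ) (hp : 0 < p) (hinv : IsUnit T) (hT : IsMPIsometry T m p) :
    IsMPIsometry T (m - 1) p := by
  set u := hinv.unit with hu_def
  have hu : (u : X →L[𝕜] X) = T := hinv.unit_spec
  set S : X →L[𝕜] X := ((u⁻¹ : (X →L[𝕜] X)ˣ) : X →L[𝕜] X) with hSdef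
  have hScoe : ∀ j : ℕ, S ^ j = ((u⁻¹ ^ j : (X →L[𝕜] X)ˣ) : X →L[𝕜] X) := by
    intro j; rw [hSdef, ← Units.val_pow_eq_pow_val]
  have hTcoe : ∀ j : ℕ, T ^ j = ((u ^ j : (X →L[𝕜] X)ˣ) : X →L[𝕜] X) := by
    intro j; rw [← hu, ← Units.val_pow_eq_pow_val]
  -- S is an (m,p)-isometry
  have hS : IsMPIsometry S m p := by
    intro y
    have h := hT ((S ^ m) y)
    have hterm : ∀ k, k ≤ m → (T ^ k) ((S ^ m) y) = (S ^ (m - k)) y := by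
      intro k hk
      rw [← ContinuousLinearMap.mul_apply, hTcoe, hScoe, hScoe, ← Units.val_mul,
        pow_mul_invpow u hk]
    rw [show ∑ k ∈ Finset.range (m + 1), (-1 : ℝ) ^ k * (m.choose k : ℝ) * ‖(T ^ k) ((S ^ m) y)‖ ^ p
        = ∑ k ∈ Finset.range (m + 1), (-1 : ℝ) ^ k * (m.choose k : ℝ) * ‖(S ^ (m - k)) y‖ ^ p from
      Finset.sum_congr rfl fun k hk => by
        rw [Finset.mem_range] at hk; rw [hterm k (by omega)]] at h
    calc ∑ k ∈ Finset.range (m + 1), (-1 : ℝ) ^ k * (m.choose k : ℝ) * ‖(S ^ k) y‖ ^ p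
        = ∑ k ∈ Finset.range (m + 1), (-1 : ℝ) ^ (m - k) * (m.choose (m - k) : ℝ) * ‖(S ^ (m - k)) y‖ ^ p := by
          rw [← Finset.sum_range_reflect]
          refine Finset.sum_congr rfl fun k hk => ?_
          rw [Finset.mem_range] at hk
          rw [show m + 1 - 1 - k = m - k from rfl]
      _ = ∑ k ∈ Finset.range (m + 1), (-1 : ℝ) ^ k * (m.choose k : ℝ) * ‖(S ^ (m - k)) y‖ ^ p := by
          refine Finset.sum_congr rfl fun k hk => ?_
          rw [Finset.mem_range] at hk
          rw [neg_one_pow_sub_even m k (by omega) hmeven, Nat.choose_symm (by omega)]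
      _ = 0 := h
  -- now combine
  intro x
  rw [show m - 1 + 1 = m by omega]
  have hle := key2 T m hm hmeven p hT x
  have hge : 0 ≤ ∑ k ∈ Finset.range m, (-1 : ℝ) ^ k * ((m - 1).choose k : ℝ) * ‖(T ^ k) x‖ ^ p := by
    have h2 := key2 S m hm hmeven p hS ((T ^ (m - 1)) x)
    have hterm : ∀ k, k ≤ m - 1 → (S ^ k) ((T ^ (m - 1)) x) = (T ^ (m - 1 - k)) x := by
      intro k hk
      rw [← ContinuousLinearMap.mul_apply, hScoe, hTcoe, hTcoe, ← Units.val_mul]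
      congr 1
      have h3 := pow_mul_invpow u⁻¹ hk
      rw [inv_inv] at h3
      rw [h3]
    rw [show ∑ k ∈ Finset.range m, (-1 : ℝ) ^ k * ((m - 1).choose k : ℝ) * ‖(S ^ k) ((T ^ (m - 1)) x)‖ ^ p
        = ∑ k ∈ Finset.range m, (-1 : ℝ) ^ k * ((m - 1).choose k : ℝ) * ‖(T ^ (m - 1 - k)) x‖ ^ p from
      Finset.sum_congr rfl fun k hk => by
        rw [hterm k (by rw [Finset.mem_range] at hk; omega)]] at h2
    have hodd : Odd (m - 1) := by
      rw [Nat.even_iff] at hmeven; rw [Nat.odd_iff]; omega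
    have hrefl : ∑ k ∈ Finset.range m, (-1 : ℝ) ^ k * ((m - 1).choose k : ℝ) * ‖(T ^ (m - 1 - k)) x‖ ^ p
        = -∑ k ∈ Finset.range m, (-1 : ℝ) ^ k * ((m - 1).choose k : ℝ) * ‖(T ^ k) x‖ ^ p := by
      rw [← Finset.sum_neg_distrib]
      rw [show (∑ k ∈ Finset.range m, -((-1 : ℝ) ^ k * ((m - 1).choose k : ℝ) * ‖(T ^ k) x‖ ^ p))
          = ∑ k ∈ Finset.range m, -((-1 : ℝ) ^ (m - 1 - k) * ((m - 1).choose (m - 1 - k) : ℝ) * ‖(T ^ (m - 1 - k)) x‖ ^ p) from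
        (Finset.sum_range_reflect _ _).symm]
      refine Finset.sum_congr rfl fun k hk => ?_
      rw [Finset.mem_range] at hk
      rw [neg_one_pow_sub_odd (m - 1) k (by omega) hodd, Nat.choose_symm (by omega)]
      ring
    rw [hrefl] at h2
    linarith
  linarith
end

section
/- Let T be a bounded linear operator on a Banach space X that is an (m,p)-isometry. Then for all integers n ≥ m and all x ∈ X: ‖Tⁿx‖^p = ∑_{k=0}^{m-1} (-1)^{m-1-k} (n choose k) (n-1-k choose m-1-k) ‖T^k x‖^p. -/
/-!
The sequence `f j = ‖T^j x‖^p` satisfies `Δ^m f = 0`: applying the defining identity to `T^j x`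
gives `(-1)^m Δ^m f j = 0`. Hence Newton's forward-difference formula
`f n = ∑_{k<m} (n choose k) Δ^k f 0` terminates, and expanding `Δ^k f 0` in the values `f i`
collects, for each `i < m`, the coefficient
`∑_{i≤k<m} (-1)^(k-i) (n choose k) (k choose i) = (n choose i) ∑_{t<m-i} (-1)^t (n-i choose t)`,
a partial alternating sum of a row of Pascal's triangle, equal to
`(-1)^(m-1-i) (n choose i) (n-1-i choose m-1-i)`.
-/

open Finset

theorem Int.sum_Ico_neg_one_pow_mul_choose_mul_choose {n m i : ℕ} (hi : i < m) (hmn : m ≤ n) :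
    ∑ k ∈ Ico i m, (-1 : ℤ) ^ (k - i) * n.choose k * k.choose i
      = (-1) ^ (m - 1 - i) * n.choose i * (n - 1 - i).choose (m - 1 - i) := by
  have hterm (t : ℕ) : (-1 : ℤ) ^ (i + t - i) * n.choose (i + t) * (i + t).choose i
      = n.choose i * ((-1) ^ t * (n - i).choose t) := by
    have := Nat.choose_mul (n := n) (Nat.le_add_right i t)
    rw [Nat.add_sub_cancel_left] at this ⊢
    rw [mul_assoc, ← Nat.cast_mul, this]
    push_cast
    ring
  obtain ⟨s, rfl⟩ : ∃ s, m = i + s + 1 := ⟨m - i - 1, by omega⟩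
  obtain ⟨r, rfl⟩ : ∃ r, n = i + r + 1 := ⟨n - i - 1, by omega⟩
  rw [sum_Ico_eq_sum_range]
  simp only [hterm, ← mul_sum, show i + s + 1 - i = s + 1 by omega,
    show i + r + 1 - i = r + 1 by omega, Int.alternating_sum_range_choose_eq_choose,
    show i + s + 1 - 1 - i = s by omega, show i + r + 1 - 1 - i = r by omega]
  ring

section

variable {G : Type*} [AddCommGroup G]

theorem fwdDiff_iter_eq_zero_of_le {M : Type*} [AddCommMonoid M] {h : M} {f : M → G} {m k : ℕ}
    (hf : (fwdDiff h)^[m] f = 0) (hmk : m ≤ k) : (fwdDiff h)^[k] f = 0 := by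
  obtain ⟨l, rfl⟩ := Nat.exists_eq_add_of_le hmk
  rw [add_comm, Function.iterate_add_apply, hf]
  exact Function.iterate_fixed (fwdDiff_const h (0 : G)) l

theorem eq_sum_range_of_fwdDiff_iter_eq_zero {f : ℕ → G} {m n : ℕ} (hf : (fwdDiff 1)^[m] f = 0)
    (hmn : m ≤ n) :
    f n = ∑ i ∈ range m,
      ((-1) ^ (m - 1 - i) * n.choose i * (n - 1 - i).choose (m - 1 - i) : ℤ) • f i := by
  have newton : f n = ∑ k ∈ range m, n.choose k • (fwdDiff 1)^[k] f 0 := by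
    have := shift_eq_sum_fwdDiff_iter 1 f n 0
    rw [zero_add, nsmul_one, Nat.cast_id] at this
    rw [this]
    refine (sum_subset (range_subset_range.mpr (by omega)) fun k _ hk => ?_).symm
    rw [fwdDiff_iter_eq_zero_of_le hf (by simpa using hk), Pi.zero_apply, smul_zero]
  calc f n = ∑ k ∈ range m, ∑ i ∈ range (k + 1),
        ((-1) ^ (k - i) * n.choose k * k.choose i : ℤ) • f i := by
        simp only [newton, fwdDiff_iter_eq_sum_shift, zero_add, smul_eq_mul, mul_one, smul_sum]
        refine sum_congr rfl fun k _ => sum_congr rfl fun i _ => ?_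
        rw [← natCast_zsmul, smul_smul]
        ring_nf
    _ = ∑ i ∈ range m, ∑ k ∈ Ico i m, ((-1) ^ (k - i) * n.choose k * k.choose i : ℤ) • f i := by
        simp only [range_eq_Ico, sum_Ico_Ico_comm]
    _ = _ := sum_congr rfl fun i hi => by
        rw [← sum_smul, Int.sum_Ico_neg_one_pow_mul_choose_mul_choose (mem_range.mp hi) hmn]

end

theorem IsMPIsometry.fwdDiff_iter_norm_pow_eq_zero {𝕜 X : Type*} [RCLike 𝕜]
    [NormedAddCommGroup X] [NormedSpace 𝕜 X] {T : X →L[𝕜] X} {m : ℕ} {p : ℝ}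
    (hT : IsMPIsometry T m p) (x : X) :
    (fwdDiff 1)^[m] (fun j => ‖(T ^ j) x‖ ^ p) = 0 := by
  funext j
  have hterm (k : ℕ) (hk : k ∈ range (m + 1)) :
      ((-1 : ℤ) ^ (m - k) * m.choose k) • ‖(T ^ (j + k • 1)) x‖ ^ p
        = (-1) ^ m * ((-1) ^ k * m.choose k * ‖(T ^ k) ((T ^ j) x)‖ ^ p) := by
    have hsign : (-1 : ℤ) ^ (m - k) = (-1) ^ m * (-1) ^ k := by
      have := Nat.lt_succ_iff.mp (mem_range.mp hk)
      rw [← pow_add]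
      simp [show m + k = m - k + 2 * k by omega, pow_add]
    rw [hsign, smul_eq_mul, mul_one, add_comm j, pow_add T, mul_apply_eq_comp, zsmul_eq_mul]
    simp only [Int.cast_mul, Int.cast_pow, Int.cast_neg, Int.cast_one, Int.cast_natCast]
    ring
  rw [fwdDiff_iter_eq_sum_shift, sum_congr rfl hterm, ← mul_sum, hT, mul_zero, Pi.zero_apply]

theorem stmt_6_general {𝕜 X : Type*} [RCLike 𝕜] [NormedAddCommGroup X] [NormedSpace 𝕜 X]
    (T : X →L[𝕜] X) (m : ℕ) (p : ℝ)
    (hT : IsMPIsometry T m p) :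
    ∀ n : ℕ, m ≤ n → ∀ x : X,
      ‖(T ^ n) x‖ ^ p = ∑ k ∈ Finset.range m, (-1 : ℝ) ^ (m - 1 - k) *
        (n.choose k : ℝ) * ((n - 1 - k).choose (m - 1 - k) : ℝ) * ‖(T ^ k) x‖ ^ p := by
  intro n hn x
  have h := eq_sum_range_of_fwdDiff_iter_eq_zero (hT.fwdDiff_iter_norm_pow_eq_zero x) hn
  simpa only [zsmul_eq_mul, Int.cast_mul, Int.cast_pow, Int.cast_neg, Int.cast_one,
    Int.cast_natCast] using h

theorem stmt_6 {𝕜 X : Type*} [RCLike 𝕜] [NormedAddCommGroup X] [NormedSpace 𝕜 X]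
    [CompleteSpace X] (T : X →L[𝕜] X) (m : ℕ) (hm : 1 ≤ m) (p : ℝ) (hp : 0 < p)
    (hT : IsMPIsometry T m p) :
    ∀ n : ℕ, m ≤ n → ∀ x : X,
      ‖(T ^ n) x‖ ^ p = ∑ k ∈ Finset.range m, (-1 : ℝ) ^ (m - 1 - k) *
        (n.choose k : ℝ) * ((n - 1 - k).choose (m - 1 - k) : ℝ) * ‖(T ^ k) x‖ ^ p :=
  stmt_6_general T m p hT
end

section
/- Suppose m, μ ≥ 1 are integers, p, q ∈ (0,∞), and the intersection 𝔄̂_{m,p} ∩ 𝔄̂_{μ,q} is nonempty. Then (m-1)·q = (μ-1)·p. -/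
/-- The `m`-th iterated forward difference of a real sequence, evaluated at `n`:
`(D^m a)_n = ∑_{k=0}^{m} (-1)^k (m choose k) a_{n+k}`. -/
def Dseq (a : ℕ → ℝ) (m n : ℕ) : ℝ :=
  ∑ k ∈ Finset.range (m + 1), (-1 : ℝ) ^ k * (m.choose k : ℝ) * a (n + k)

/-- `a ∈ 𝔄_{m,p}`: a nonnegative sequence with `D^m (a^p) = 0`. -/
def MemA (a : ℕ → ℝ) (m : ℕ) (p : ℝ) : Prop :=
  (∀ n, 0 ≤ a n) ∧ ∀ n, Dseq (fun j => a j ^ p) m n = 0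

/-- `a ∈ 𝔄̂_{m,p}`: `a ∈ 𝔄_{m,p}` and `D^{m-1} (a^p) ≠ 0`. -/
def MemAhat (a : ℕ → ℝ) (m : ℕ) (p : ℝ) : Prop :=
  MemA a m p ∧ ¬ ∀ n, Dseq (fun j => a j ^ p) (m - 1) n = 0

/-!
If `D^m (a^p) = 0` but `D^(m-1) (a^p) ≠ 0`, the Gregory–Newton formula writes `a_n^p` as a
polynomial in `n` of exact degree `m - 1`, whose leading coefficient is positive because `a ≥ 0`;
hence `a_n^p / n^(m-1)` has a positive limit. Raising the limits for `(m, p)` and `(μ, q)` to the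
powers `q` and `p` shows that `a_n^(pq)` is comparable both to `n^((m-1)q)` and to `n^((μ-1)p)`,
which forces the two exponents to coincide.
-/

open Filter Finset Asymptotics Topology fwdDiff

lemma Dseq_eq_neg_one_pow_mul_fwdDiff_iter (b : ℕ → ℝ) (m n : ℕ) :
    Dseq b m n = (-1) ^ m * Δ_[1] ^[m] b n := by
  rw [fwdDiff_iter_eq_sum_shift, Dseq, mul_sum]
  refine sum_congr rfl fun k hk => ?_
  have hkm : k ≤ m := Nat.lt_succ_iff.mp (mem_range.mp hk)
  have hsign : (-1 : ℝ) ^ m * (-1) ^ (m - k) = (-1) ^ k := by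
    rw [← Nat.add_sub_cancel' hkm, pow_add, Nat.add_sub_cancel_left, mul_assoc, ← mul_pow,
      neg_one_mul, neg_neg, one_pow, mul_one]
  rw [zsmul_eq_mul, smul_eq_mul, mul_one]
  push_cast
  rw [← hsign]
  ring

lemma forall_Dseq_eq_zero_iff (b : ℕ → ℝ) (m : ℕ) :
    (∀ n, Dseq b m n = 0) ↔ Δ_[1] ^[m] b = 0 := by
  simp [funext_iff, Dseq_eq_neg_one_pow_mul_fwdDiff_iter]

lemma fwdDiff_iter_eq_zero_of_le_s7 {b : ℕ → ℝ} {m k : ℕ} (h : Δ_[1] ^[m] b = 0) (hmk : m ≤ k) :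
    Δ_[1] ^[k] b = 0 := by
  obtain ⟨j, rfl⟩ := Nat.exists_eq_add_of_le hmk
  rw [add_comm, Function.iterate_add_apply, h]
  exact Function.iterate_fixed (fwdDiff_const 1 0) j

lemma eq_sum_choose_mul_fwdDiff_iter {b : ℕ → ℝ} {M : ℕ} (h : Δ_[1] ^[M + 1] b = 0) (n : ℕ) :
    b n = ∑ k ∈ range (M + 1), n.choose k * Δ_[1] ^[k] b 0 := by
  have newton := shift_eq_sum_fwdDiff_iter 1 b n 0
  simp only [zero_add, smul_eq_mul, mul_one, nsmul_eq_mul] at newton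
  rw [newton]
  have hsub : ∀ N, N ≤ n + M + 1 → range N ⊆ range (n + M + 1) := fun N hN =>
    range_subset_range.mpr hN
  rw [sum_subset (hsub _ (by omega)), sum_subset (hsub (M + 1) (by omega))]
  · intro k hk hk'
    rw [fwdDiff_iter_eq_zero_of_le_s7 h (by simpa using hk'), Pi.zero_apply, mul_zero]
  · intro k hk hk'
    rw [Nat.choose_eq_zero_of_lt (by simpa using hk'), Nat.cast_zero, zero_mul]

lemma fwdDiff_iter_apply_eq_apply_zero {b : ℕ → ℝ} {M : ℕ} (h : Δ_[1] ^[M + 1] b = 0) (n : ℕ) :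
    Δ_[1] ^[M] b n = Δ_[1] ^[M] b 0 := by
  have h1 : Δ_[1] ^[0 + 1] (Δ_[1] ^[M] b) = 0 := by
    rw [← Function.iterate_add_apply, zero_add, add_comm, h]
  simpa using eq_sum_choose_mul_fwdDiff_iter h1 n

lemma tendsto_choose_div_pow (k : ℕ) :
    Tendsto (fun n : ℕ => (n.choose k : ℝ) / n ^ k) atTop (𝓝 (k.factorial : ℝ)⁻¹) := by
  have hequiv := (isEquivalent_choose k).div (IsEquivalent.refl (u := fun n : ℕ => (n : ℝ) ^ k))
  refine hequiv.symm.tendsto_nhds (tendsto_const_nhds.congr' ?_)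
  filter_upwards [eventually_ne_atTop 0] with n hn
  simp only [Pi.div_apply]
  field_simp

lemma tendsto_choose_div_pow_of_lt {k K : ℕ} (hk : k < K) :
    Tendsto (fun n : ℕ => (n.choose k : ℝ) / n ^ K) atTop (𝓝 0) :=
  ((isTheta_choose k).isBigO.trans_isLittleO
    ((isLittleO_pow_pow_atTop_of_lt hk).comp_tendsto
      tendsto_natCast_atTop_atTop)).tendsto_div_nhds_zero

lemma tendsto_div_pow_of_fwdDiff_iter_eq_zero {b : ℕ → ℝ} {M : ℕ} (h : Δ_[1] ^[M + 1] b = 0) :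
    Tendsto (fun n : ℕ => b n / n ^ M) atTop (𝓝 (Δ_[1] ^[M] b 0 / M.factorial)) := by
  have lower : Tendsto (fun n : ℕ => ∑ k ∈ range M, (n.choose k : ℝ) / n ^ M * Δ_[1] ^[k] b 0)
      atTop (𝓝 0) := by
    simpa using tendsto_finsetSum (range M) fun k hk =>
      (tendsto_choose_div_pow_of_lt (mem_range.mp hk)).mul_const (Δ_[1] ^[k] b 0)
  have top := (tendsto_choose_div_pow M).mul_const (Δ_[1] ^[M] b 0)
  convert lower.add top using 1
  · ext n
    rw [eq_sum_choose_mul_fwdDiff_iter h, sum_range_succ, add_div, sum_div]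
    simp only [mul_div_right_comm]
  · rw [zero_add, inv_mul_eq_div]

lemma exponent_eq_zero_of_tendsto_rpow {e c : ℝ} (hc : 0 < c)
    (h : Tendsto (fun n : ℕ => (n : ℝ) ^ e) atTop (𝓝 c)) : e = 0 := by
  rcases lt_trichotomy e 0 with he | he | he
  · have h0 : Tendsto (fun n : ℕ => (n : ℝ) ^ e) atTop (𝓝 0) := by
      simpa [Function.comp_def] using
        (tendsto_rpow_neg_atTop (neg_pos.mpr he)).comp tendsto_natCast_atTop_atTop
    exact absurd (tendsto_nhds_unique h h0) hc.ne'
  · exact he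
  · exact absurd h (not_tendsto_nhds_of_tendsto_atTop
      ((tendsto_rpow_atTop he).comp tendsto_natCast_atTop_atTop) c)

lemma rpow_exponent_eq_of_tendsto_div {u : ℕ → ℝ} {α β L K : ℝ} (hL : 0 < L) (hK : 0 < K)
    (hα : Tendsto (fun n : ℕ => u n / (n : ℝ) ^ α) atTop (𝓝 L))
    (hβ : Tendsto (fun n : ℕ => u n / (n : ℝ) ^ β) atTop (𝓝 K)) : α = β := by
  have hu : ∀ᶠ n : ℕ in atTop, u n ≠ 0 := by
    filter_upwards [hα.eventually (eventually_gt_nhds hL)] with n hn hun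
    simp [hun] at hn
  have hratio : Tendsto (fun n : ℕ => (n : ℝ) ^ (α - β)) atTop (𝓝 (K / L)) := by
    refine (hβ.div hα hL.ne').congr' ?_
    filter_upwards [hu, eventually_ne_atTop 0] with n hun hn
    rw [Pi.div_apply, div_div_div_cancel_left' _ _ hun,
      Real.rpow_sub (Nat.cast_pos.mpr (Nat.pos_of_ne_zero hn))]
  exact sub_eq_zero.mp (exponent_eq_zero_of_tendsto_rpow (div_pos hK hL) hratio)

lemma MemAhat.exists_tendsto_rpow_div_pow {a : ℕ → ℝ} {M : ℕ} {p : ℝ} (h : MemAhat a (M + 1) p) :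
    ∃ L > 0, Tendsto (fun n : ℕ => a n ^ p / (n : ℝ) ^ M) atTop (𝓝 L) := by
  obtain ⟨⟨ha, hD⟩, hD'⟩ := h
  rw [forall_Dseq_eq_zero_iff] at hD hD'
  rw [Nat.add_sub_cancel] at hD'
  have hlim := tendsto_div_pow_of_fwdDiff_iter_eq_zero hD
  have hne : Δ_[1] ^[M] (fun j => a j ^ p) 0 ≠ 0 := fun h0 =>
    hD' (funext fun n => by rw [fwdDiff_iter_apply_eq_apply_zero hD n, h0, Pi.zero_apply])
  have hnonneg : ∀ n : ℕ, 0 ≤ a n ^ p / (n : ℝ) ^ M := fun n =>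
    div_nonneg (Real.rpow_nonneg (ha n) p) (by positivity)
  exact ⟨_, (ge_of_tendsto' hlim hnonneg).lt_of_ne
    (div_ne_zero hne (Nat.cast_ne_zero.mpr M.factorial_ne_zero)).symm, hlim⟩

lemma tendsto_rpow_mul_div_rpow_mul {x : ℕ → ℝ} (hx : ∀ n, 0 ≤ x n) {r s c : ℝ} {N : ℕ}
    (hs : 0 ≤ s) (h : Tendsto (fun n : ℕ => x n ^ r / (n : ℝ) ^ N) atTop (𝓝 c)) :
    Tendsto (fun n : ℕ => x n ^ (r * s) / (n : ℝ) ^ (N * s)) atTop (𝓝 (c ^ s)) := by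
  refine (h.rpow_const (Or.inr hs)).congr fun n => ?_
  rw [Real.div_rpow (Real.rpow_nonneg (hx n) r) (by positivity), ← Real.rpow_mul (hx n),
    ← Real.rpow_natCast, ← Real.rpow_mul (Nat.cast_nonneg n)]

theorem stmt_7 (m μ : ℕ) (hm : 1 ≤ m) (hμ : 1 ≤ μ) (p q : ℝ) (hp : 0 < p) (hq : 0 < q)
    (a : ℕ → ℝ) (h₁ : MemAhat a m p) (h₂ : MemAhat a μ q) :
    ((m - 1 : ℕ) : ℝ) * q = ((μ - 1 : ℕ) : ℝ) * p := by
  obtain ⟨M, rfl⟩ : ∃ M, m = M + 1 := ⟨m - 1, by omega⟩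
  obtain ⟨N, rfl⟩ : ∃ N, μ = N + 1 := ⟨μ - 1, by omega⟩
  obtain ⟨L, hL, hLlim⟩ := h₁.exists_tendsto_rpow_div_pow
  obtain ⟨K, hK, hKlim⟩ := h₂.exists_tendsto_rpow_div_pow
  have ha : ∀ n, 0 ≤ a n := h₁.1.1
  have hpq := tendsto_rpow_mul_div_rpow_mul ha hq.le hLlim
  have hqp := tendsto_rpow_mul_div_rpow_mul ha hp.le hKlim
  rw [mul_comm q p] at hqp
  simpa using rpow_exponent_eq_of_tendsto_div (Real.rpow_pos_of_pos hL q)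
    (Real.rpow_pos_of_pos hK p) hpq hqp
end

section
/- Let T be a bounded linear operator on a Banach space X that is a strict (m,p)-isometry. Then for every integer k ≥ 1, T is a strict (k(m-1)+1, k·p)-isometry. -/
open Finset Function fwdDiff

private lemma sum_eq_fwd (f : ℕ → ℝ) (m : ℕ) :
    ∑ j ∈ Finset.range (m+1), (-1:ℝ)^j * (m.choose j : ℝ) * f j
      = (-1:ℝ)^m * ((fwdDiff (1:ℕ))^[m] f 0) := by
  rw [fwdDiff_iter_eq_sum_shift, Finset.mul_sum]
  refine Finset.sum_congr rfl fun j hj => ?_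
  have hjm : j ≤ m := Nat.lt_succ_iff.mp (Finset.mem_range.mp hj)
  have h0 : (0 + j • 1 : ℕ) = j := by simp
  rw [h0, zsmul_eq_mul]
  push_cast
  have h1 : (-1:ℝ)^m = (-1)^(m-j) * (-1)^j := by rw [← pow_add, Nat.sub_add_cancel hjm]
  have h2 : (-1:ℝ)^(m-j) * (-1:ℝ)^(m-j) = 1 := by
    rw [← pow_add]; exact Even.neg_one_pow ⟨m-j, rfl⟩
  rw [h1]
  linear_combination (-((-1:ℝ)^j * (m.choose j : ℝ) * f j)) * h2

private lemma const_of_fwd (g : ℕ → ℝ) (h : ∀ n, (fwdDiff (1:ℕ)) g n = 0) : ∀ n, g n = g 0 := by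
  intro n
  induction n with
  | zero => rfl
  | succ n ih =>
    have := h n
    simp only [fwdDiff, sub_eq_zero] at this
    rw [this, ih]

private lemma fwd_succ_of_const (f : ℕ → ℝ) (a : ℕ) (α : ℝ)
    (hf : ∀ n, (fwdDiff (1:ℕ))^[a] f n = α) : ∀ n, (fwdDiff (1:ℕ))^[a+1] f n = 0 := by
  intro n
  rw [Function.iterate_succ_apply']
  simp [fwdDiff, hf]

private lemma fwd_iter_shift (f : ℕ → ℝ) (a : ℕ) :
    ∀ n, (fwdDiff (1:ℕ))^[a] (fun j => f (j+1)) n = (fwdDiff (1:ℕ))^[a] f (n+1) := by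
  induction a generalizing f with
  | zero => intro n; rfl
  | succ a ih =>
    intro n
    rw [Function.iterate_succ_apply, Function.iterate_succ_apply]
    have : (fwdDiff (1:ℕ)) (fun j => f (j+1)) = fun j => (fwdDiff (1:ℕ)) f (j+1) := by
      funext j; simp [fwdDiff]
    rw [this, ih]

private lemma fwd_prod (N : ℕ) : ∀ a b : ℕ, a + b = N → ∀ (f g : ℕ → ℝ) (α β : ℝ),
    (∀ n, (fwdDiff (1:ℕ))^[a] f n = α) → (∀ n, (fwdDiff (1:ℕ))^[b] g n = β) →
    ∀ n, (fwdDiff (1:ℕ))^[a+b] (fun n => f n * g n) n = ((a+b).choose a : ℝ) * α * β := by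
  induction N using Nat.strong_induction_on with
  | _ N IH =>
    intro a b hab f g α β hf hg n
    match a, b with
    | 0, b =>
      have hfc : ∀ n, f n = α := hf
      have : (fun n => f n * g n) = α • g := by funext j; simp [hfc j]
      rw [this]
      simp only [zero_add, fwdDiff_iter_const_smul, Pi.smul_apply, smul_eq_mul,
        Nat.choose_zero_right, Nat.cast_one, hg n]
      ring
    | a+1, 0 =>
      have hgc : ∀ n, g n = β := hg
      have : (fun n => f n * g n) = β • f := by funext j; simp [hgc j]; ring
      rw [this]
      simp only [add_zero, fwdDiff_iter_const_smul, Pi.smul_apply, smul_eq_mul,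
        Nat.choose_self, Nat.cast_one, hf n]
      ring
    | a+1, b+1 =>
      have hD : (fwdDiff (1:ℕ)) (fun n => f n * g n)
          = fun n => (f (n+1) * (fwdDiff (1:ℕ)) g n) + ((fwdDiff (1:ℕ)) f n * g n) := by
        funext j; simp only [fwdDiff]; ring
      have hsum : a + 1 + (b + 1) = (a + 1 + b) + 1 := by ring
      rw [hsum, Function.iterate_succ_apply, hD]
      have hadd : (fwdDiff (1:ℕ))^[a+1+b] (fun n => (f (n+1) * (fwdDiff (1:ℕ)) g n) + ((fwdDiff (1:ℕ)) f n * g n)) n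
          = (fwdDiff (1:ℕ))^[a+1+b] (fun n => f (n+1) * (fwdDiff (1:ℕ)) g n) n
            + (fwdDiff (1:ℕ))^[a+1+b] (fun n => (fwdDiff (1:ℕ)) f n * g n) n := by
        exact congrFun (fwdDiff_iter_add (1:ℕ) (fun n => f (n+1) * (fwdDiff (1:ℕ)) g n)
          (fun n => (fwdDiff (1:ℕ)) f n * g n) (a+1+b)) n
      rw [hadd]
      -- first term: shifted f (degree a+1, value α) times Δ g (degree b, value β)
      have h1 : ∀ n, (fwdDiff (1:ℕ))^[a+1] (fun j => f (j+1)) n = α := by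
        intro n; rw [fwd_iter_shift]; exact hf _
      have h2 : ∀ n, (fwdDiff (1:ℕ))^[b] ((fwdDiff (1:ℕ)) g) n = β := by
        intro n; rw [← Function.iterate_succ_apply]; exact hg n
      have h3 : ∀ n, (fwdDiff (1:ℕ))^[a] ((fwdDiff (1:ℕ)) f) n = α := by
        intro n; rw [← Function.iterate_succ_apply]; exact hf n
      have e1 := IH (a+1+b) (by omega) (a+1) b rfl (fun j => f (j+1)) ((fwdDiff (1:ℕ)) g) α β h1 h2 n
      have e2 := IH (a+1+b) (by omega) a (b+1) (by omega) ((fwdDiff (1:ℕ)) f) g α β h3 hg n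
      rw [e1]
      rw [show a + (b+1) = a + 1 + b by ring] at e2
      rw [e2]
      have hch : ((a+1+(b+1)).choose (a+1) : ℝ)
          = ((a+1+b).choose (a+1) : ℝ) + ((a+1+b).choose a : ℝ) := by
        rw [show a+1+(b+1) = (a+b+1)+1 by ring, show a+1+b = a+b+1 by ring]
        rw [Nat.choose_succ_succ (a+b+1) a]
        push_cast; ring
      rw [show (a+1+b+1) = (a+1+(b+1)) from by ring, hch]; ring

private lemma fwd_pow (f : ℕ → ℝ) (d : ℕ) (c : ℝ) (hf : ∀ n, (fwdDiff (1:ℕ))^[d] f n = c) :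
    ∀ k : ℕ, 1 ≤ k → ∃ γ : ℝ, 0 < γ ∧ ∀ n, (fwdDiff (1:ℕ))^[k*d] (fun n => (f n)^k) n = γ * c^k := by
  intro k hk
  induction k with
  | zero => omega
  | succ k ih =>
    rcases Nat.eq_or_lt_of_le hk with h1 | h1
    · refine ⟨1, one_pos, ?_⟩
      have : k = 0 := by omega
      subst this
      intro n; simpa using hf n
    · have hk1 : 1 ≤ k := by omega
      obtain ⟨γ, hγ, hγe⟩ := ih hk1
      refine ⟨(((k*d+d).choose (k*d) : ℕ) : ℝ) * γ, ?_, ?_⟩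
      · have : 0 < ((k*d+d).choose (k*d)) := Nat.choose_pos (by omega)
        positivity
      · intro n
        have := fwd_prod (k*d + d) (k*d) d rfl (fun n => (f n)^k) f (γ * c^k) c hγe hf n
        have hfun : (fun n => (f n)^(k+1)) = (fun n => (f n)^k * f n) := by
          funext j; ring
        rw [show (k+1)*d = k*d + d by ring, hfun, this]
        ring

private lemma fwd_iter_trans (f : ℕ → ℝ) (a n : ℕ) :
    (fwdDiff (1:ℕ))^[a] f n = (fwdDiff (1:ℕ))^[a] (fun j => f (n + j)) 0 := by
  rw [fwdDiff_iter_eq_sum_shift, fwdDiff_iter_eq_sum_shift]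
  refine Finset.sum_congr rfl fun j hj => ?_
  simp [smul_eq_mul]

private lemma sum_eq_fwd' {𝕜 X : Type*} [RCLike 𝕜] [NormedAddCommGroup X] [NormedSpace 𝕜 X]
    (T : X →L[𝕜] X) (x : X) (q : ℝ) (M : ℕ) :
    ∑ j ∈ Finset.range (M+1), (-1:ℝ)^j * (M.choose j : ℝ) * ‖(T ^ j) x‖ ^ q
      = (-1:ℝ)^M * ((fwdDiff (1:ℕ))^[M] (fun n => ‖(T ^ n) x‖ ^ q) 0) :=
  sum_eq_fwd _ _

/-- `T` is a strict `(m,p)`-isometry: an `(m,p)`-isometry which, in case `m ≥ 2`,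
is not an `(m-1,p)`-isometry. -/
def IsStrictMPIsometry {𝕜 X : Type*} [RCLike 𝕜] [NormedAddCommGroup X] [NormedSpace 𝕜 X]
    (T : X →L[𝕜] X) (m : ℕ) (p : ℝ) : Prop :=
  IsMPIsometry T m p ∧ (2 ≤ m → ¬ IsMPIsometry T (m - 1) p)

theorem stmt_11 {𝕜 X : Type*} [RCLike 𝕜] [NormedAddCommGroup X] [NormedSpace 𝕜 X]
    [CompleteSpace X] (T : X →L[𝕜] X) (m : ℕ) (hm : 1 ≤ m) (p : ℝ) (hp : 0 < p)
    (hT : IsStrictMPIsometry T m p) :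
    ∀ k : ℕ, 1 ≤ k → IsStrictMPIsometry T (k * (m - 1) + 1) ((k : ℝ) * p) := by
  intro k hk
  have hnorm : ∀ (x : X) (n j : ℕ), ‖(T ^ j) ((T ^ n) x)‖ = ‖(T ^ (n + j)) x‖ := by
    intro x n j
    rw [add_comm, pow_add, ContinuousLinearMap.mul_apply]
  have hpow0 : ∀ (x : X) (j : ℕ),
      ‖(T ^ j) x‖ ^ ((k:ℝ) * p) = (‖(T ^ j) x‖ ^ p) ^ k := by
    intro x j
    rw [mul_comm, Real.rpow_mul (norm_nonneg _), Real.rpow_natCast]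
  -- Step A: m-th forward difference of n ↦ ‖Tⁿx‖^p vanishes everywhere
  have hA : ∀ (x : X) (n : ℕ),
      (fwdDiff (1:ℕ))^[m] (fun j => ‖(T ^ j) x‖ ^ p) n = 0 := by
    have h0 : ∀ y : X, (fwdDiff (1:ℕ))^[m] (fun j => ‖(T ^ j) y‖ ^ p) 0 = 0 := by
      intro y
      have h := hT.1 y
      rw [sum_eq_fwd' T y p m] at h
      exact (mul_eq_zero.mp h).resolve_left (pow_ne_zero _ (by norm_num))
    intro x n
    rw [fwd_iter_trans]
    have h2 := h0 ((T ^ n) x)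
    have hfun : (fun j => ‖(T ^ j) ((T ^ n) x)‖ ^ p) = (fun j => ‖(T ^ (n + j)) x‖ ^ p) := by
      funext j; rw [hnorm]
    rw [hfun] at h2
    exact h2
  -- Step B: (m-1)-th forward difference is constant
  have hB : ∀ (x : X) (n : ℕ),
      (fwdDiff (1:ℕ))^[m-1] (fun j => ‖(T ^ j) x‖ ^ p) n
        = (fwdDiff (1:ℕ))^[m-1] (fun j => ‖(T ^ j) x‖ ^ p) 0 := by
    intro x
    apply const_of_fwd
    intro n
    have h := hA x n
    rw [show m = (m-1)+1 from (Nat.succ_pred_eq_of_pos hm).symm,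
      Function.iterate_succ_apply'] at h
    exact h
  constructor
  · -- (k(m-1)+1, kp)-isometry
    intro x
    obtain ⟨γ, hγ, hγe⟩ := fwd_pow (fun j => ‖(T ^ j) x‖ ^ p) (m-1)
      ((fwdDiff (1:ℕ))^[m-1] (fun j => ‖(T ^ j) x‖ ^ p) 0) (hB x) k hk
    have hz := fwd_succ_of_const _ _ _ hγe
    rw [sum_eq_fwd' T x ((k:ℝ)*p) (k*(m-1)+1)]
    have h9 : (fwdDiff (1:ℕ))^[k*(m-1)+1] (fun n => ‖(T ^ n) x‖ ^ ((k:ℝ)*p)) 0 = 0 := by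
      have hfn : (fun n => ‖(T ^ n) x‖ ^ ((k:ℝ)*p)) = (fun n => (‖(T ^ n) x‖ ^ p) ^ k) :=
        funext fun j => hpow0 x j
      rw [hfn]
      exact hz 0
    rw [h9, mul_zero]
  · -- strictness
    intro hM
    have h1 : 0 < k * (m-1) := by omega
    have h2 : 0 < m - 1 := by
      rcases Nat.eq_zero_or_pos (m-1) with h | h
      · rw [h, Nat.mul_zero] at h1; omega
      · exact h
    have hm2 : 2 ≤ m := by omega
    have hne := hT.2 hm2
    unfold IsMPIsometry at hne
    push_neg at hne
    obtain ⟨x₀, hx₀⟩ := hne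
    have hc0 : (fwdDiff (1:ℕ))^[m-1] (fun j => ‖(T ^ j) x₀‖ ^ p) 0 ≠ 0 := by
      intro h
      apply hx₀
      rw [sum_eq_fwd' T x₀ p (m-1), h, mul_zero]
    intro hcon
    have hM1 : k * (m-1) + 1 - 1 = k * (m-1) := by omega
    rw [hM1] at hcon
    have hs := hcon x₀
    rw [sum_eq_fwd' T x₀ ((k:ℝ)*p) (k*(m-1))] at hs
    have hs2 : (fwdDiff (1:ℕ))^[k*(m-1)] (fun n => (‖(T ^ n) x₀‖ ^ p) ^ k) 0 = 0 := by
      have hfn : (fun n => ‖(T ^ n) x₀‖ ^ ((k:ℝ)*p)) = (fun n => (‖(T ^ n) x₀‖ ^ p) ^ k) :=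
        funext fun j => hpow0 x₀ j
      rw [hfn] at hs
      exact (mul_eq_zero.mp hs).resolve_left (pow_ne_zero _ (by norm_num))
    obtain ⟨γ, hγ, hγe⟩ := fwd_pow (fun j => ‖(T ^ j) x₀‖ ^ p) (m-1)
      ((fwdDiff (1:ℕ))^[m-1] (fun j => ‖(T ^ j) x₀‖ ^ p) 0) (hB x₀) k hk
    have hval : γ * ((fwdDiff (1:ℕ))^[m-1] (fun j => ‖(T ^ j) x₀‖ ^ p) 0) ^ k = 0 := by
      rw [← hγe 0]
      exact hs2
    rcases mul_eq_zero.mp hval with h | h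
    · exact absurd h (ne_of_gt hγ)
    · exact absurd h (pow_ne_zero _ hc0)
end

section
/- Let T be a bounded linear operator on a Banach space X that is a strict (m,p)-isometry for some integer m > 1 and some p ∈ (0,∞). Then there exist an integer m₀ > 1 and p₀ ∈ (0,∞) such that for all integers μ ≥ 1 and all q ∈ (0,∞): T is a strict (μ,q)-isometry if, and only if, (μ,q) = (k(m₀-1)+1, k·p₀) for some integer k ≥ 1. -/
open Polynomial Filter Function Finset Topology

namespace StrictIsoAux

set_option linter.unusedVariables false


/-- Uniqueness of interpolating polynomials on `ℕ`. -/
lemma poly_unique {P Q : ℝ[X]} (h : ∀ n : ℕ, P.eval (n : ℝ) = Q.eval (n : ℝ)) : P = Q := by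
  apply Polynomial.eq_of_infinite_eval_eq
  apply Set.Infinite.mono (s := Set.range (fun n : ℕ => (n : ℝ)))
  · rintro _ ⟨n, rfl⟩; exact h n
  · exact Set.infinite_range_of_injective Nat.cast_injective

lemma fwdDiff_iter_zero_fun (m : ℕ) : (fwdDiff (1:ℕ))^[m] (fun _ : ℕ => (0:ℝ)) = fun _ => 0 := by
  induction m with
  | zero => rfl
  | succ m IH => rw [iterate_succ_apply, fwdDiff_const, IH]

lemma fwdDiff_eval (P : ℝ[X]) :
    fwdDiff (1:ℕ) (fun n : ℕ => P.eval (n:ℝ)) = fun n : ℕ => (P.comp (X + 1) - P).eval (n:ℝ) := by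
  funext n
  simp only [fwdDiff, eval_sub, eval_comp, eval_add, eval_X, eval_one]
  push_cast
  ring_nf

lemma natDegree_comp_X_add_one_sub_lt (P : ℝ[X]) (hP : P.natDegree ≠ 0) :
    (P.comp (X + 1) - P).natDegree < P.natDegree := by
  have h0 : P ≠ 0 := fun h => hP (by simp [h])
  have hX1 : (X + (1:ℝ[X])).natDegree = 1 := by simpa using natDegree_X_add_C (1:ℝ)
  have hXlc : (X + (1:ℝ[X])).leadingCoeff = 1 := by simpa using leadingCoeff_X_add_C (1:ℝ)
  have hnd : (P.comp (X + 1)).natDegree = P.natDegree := by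
    rw [natDegree_comp, hX1, mul_one]
  have hc0 : P.comp (X + 1) ≠ 0 := by
    intro h
    have := hnd
    rw [h, natDegree_zero] at this
    exact hP this.symm
  have hdeg : (P.comp (X + 1)).degree = P.degree := by
    rw [degree_eq_natDegree hc0, degree_eq_natDegree h0, hnd]
  have hlc : (P.comp (X + 1)).leadingCoeff = P.leadingCoeff := by
    rw [leadingCoeff_comp (by rw [hX1]; norm_num)]
    rw [hXlc, one_pow, mul_one]
  have hlt : (P.comp (X + 1) - P).degree < P.degree := by
    have := degree_sub_lt hdeg hc0 hlc
    rwa [hdeg] at this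
  by_cases hs : P.comp (X + 1) - P = 0
  · rw [hs, natDegree_zero]; omega
  · exact natDegree_lt_natDegree hs hlt

lemma diff_iter_eval_zero : ∀ (m : ℕ) (P : ℝ[X]), P.natDegree < m →
    ∀ j : ℕ, (fwdDiff (1:ℕ))^[m] (fun n : ℕ => P.eval (n:ℝ)) j = 0 := by
  intro m
  induction m with
  | zero => intro P h; omega
  | succ m IH =>
    intro P hP j
    rw [iterate_succ_apply, fwdDiff_eval]
    by_cases h0 : P.natDegree = 0
    · obtain ⟨a, rfl⟩ := natDegree_eq_zero.mp h0
      have : (fun n : ℕ => ((C a).comp (X + 1) - C a).eval (n:ℝ)) = fun _ : ℕ => (0:ℝ) := by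
        funext n; simp
      rw [this, fwdDiff_iter_zero_fun]
    · exact IH _ (by have := natDegree_comp_X_add_one_sub_lt P h0; omega) j

lemma exists_poly {f : ℕ → ℝ} {m : ℕ} (hm : 1 ≤ m) (hf : ∀ j, (fwdDiff (1:ℕ))^[m] f j = 0) :
    ∃ P : ℝ[X], P.natDegree ≤ m - 1 ∧ ∀ n : ℕ, f n = P.eval (n:ℝ) := by
  have hf' : ∀ k, m ≤ k → ∀ j, (fwdDiff (1:ℕ))^[k] f j = 0 := by
    intro k hk j
    obtain ⟨i, rfl⟩ := Nat.exists_eq_add_of_le hk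
    rw [add_comm, iterate_add_apply]
    have h0 : (fwdDiff (1:ℕ))^[m] f = fun _ : ℕ => (0:ℝ) := funext hf
    rw [h0, fwdDiff_iter_zero_fun]
  refine ⟨∑ k ∈ Finset.range m, Polynomial.C ((fwdDiff (1:ℕ))^[k] f 0 / k.factorial) * descPochhammer ℝ k,
    ?_, ?_⟩
  · apply natDegree_sum_le_of_forall_le
    intro k hk
    refine (natDegree_C_mul_le _ _).trans ?_
    rw [descPochhammer_natDegree]
    have := Finset.mem_range.mp hk
    omega
  · intro n
    have hN := shift_eq_sum_fwdDiff_iter (1:ℕ) f n 0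
    simp only [zero_add, smul_eq_mul, nsmul_eq_mul, mul_one] at hN
    rw [eval_finset_sum]
    have hterm : ∀ k : ℕ, (C ((fwdDiff (1:ℕ))^[k] f 0 / k.factorial) * descPochhammer ℝ k).eval (n:ℝ)
        = (n.choose k : ℝ) * (fwdDiff (1:ℕ))^[k] f 0 := by
      intro k
      rw [eval_mul, eval_C, descPochhammer_eval_eq_descFactorial,
        Nat.descFactorial_eq_factorial_mul_choose]
      push_cast
      have hk0 : (k.factorial : ℝ) ≠ 0 := by positivity
      field_simp
    have h1 : ∑ k ∈ Finset.range (n+1), (n.choose k : ℝ) * (fwdDiff (1:ℕ))^[k] f 0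
        = ∑ k ∈ Finset.range (n+1+m), (n.choose k : ℝ) * (fwdDiff (1:ℕ))^[k] f 0 := by
      apply Finset.sum_subset (Finset.range_subset_range.mpr (by omega))
      intro k _ hk
      have hnk : n < k := by
        have := Finset.mem_range.not.mp hk
        omega
      rw [Nat.choose_eq_zero_of_lt hnk]
      simp
    have h2 : ∑ k ∈ Finset.range m, (n.choose k : ℝ) * (fwdDiff (1:ℕ))^[k] f 0
        = ∑ k ∈ Finset.range (n+1+m), (n.choose k : ℝ) * (fwdDiff (1:ℕ))^[k] f 0 := by
      apply Finset.sum_subset (Finset.range_subset_range.mpr (by omega))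
      intro k _ hk
      have hmk : m ≤ k := by
        have := Finset.mem_range.not.mp hk
        omega
      rw [hf' k hmk 0]
      simp
    calc f n = ∑ k ∈ Finset.range (n+1), (n.choose k : ℝ) * (fwdDiff (1:ℕ))^[k] f 0 := hN
      _ = ∑ k ∈ Finset.range (n+1+m), (n.choose k : ℝ) * (fwdDiff (1:ℕ))^[k] f 0 := h1
      _ = ∑ k ∈ Finset.range m, (n.choose k : ℝ) * (fwdDiff (1:ℕ))^[k] f 0 := h2.symm
      _ = _ := by
          apply Finset.sum_congr rfl
          intro k _
          exact (hterm k).symm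


lemma rpow_degree {P R : ℝ[X]} {r : ℝ} (hr : 0 < r) (hd : 1 ≤ P.natDegree)
    (hpos : ∀ n : ℕ, 0 < P.eval (n:ℝ)) (hR : ∀ n : ℕ, R.eval (n:ℝ) = (P.eval (n:ℝ)) ^ r) :
    (R.natDegree : ℝ) = r * P.natDegree := by
  have hP0 : P ≠ 0 := fun h => by simpa [h] using (hpos 0)
  have hRpos : ∀ n : ℕ, 0 < R.eval (n:ℝ) := fun n => by
    rw [hR n]; exact Real.rpow_pos_of_pos (hpos n) r
  have hR0 : R ≠ 0 := fun h => by simpa [h] using (hRpos 0)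
  set c := P.leadingCoeff with hc
  set c' := R.leadingCoeff with hc'
  set d := P.natDegree with hdd
  set e := R.natDegree with hee
  have hc'0 : c' ≠ 0 := leadingCoeff_ne_zero.mpr hR0
  -- limits of eval/x^deg
  have hlim : ∀ Q : ℝ[X], Q ≠ 0 → Tendsto (fun n : ℕ => Q.eval (n:ℝ) / (n:ℝ) ^ Q.natDegree)
      atTop (𝓝 Q.leadingCoeff) := by
    intro Q hQ
    have hdeg : Q.degree = (X ^ Q.natDegree : ℝ[X]).degree := by
      rw [degree_X_pow, degree_eq_natDegree hQ]
    have h := Polynomial.div_tendsto_leadingCoeff_div_of_degree_eq Q (X ^ Q.natDegree : ℝ[X]) hdeg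
    simp only [leadingCoeff_X_pow, div_one, eval_pow, eval_X] at h
    exact h.comp tendsto_natCast_atTop_atTop
  have h1n := hlim P hP0
  have h2n := hlim R hR0
  have hcpos : 0 < c := by
    rcases (leadingCoeff_ne_zero.mpr hP0).lt_or_gt with h | h
    · exfalso
      have hnn : ∀ᶠ n : ℕ in atTop, 0 ≤ P.eval (n:ℝ) / (n:ℝ) ^ d := by
        filter_upwards [eventually_ge_atTop 1] with n hn
        have h1 : (0:ℝ) < (n:ℝ) ^ d := by
          have : (0:ℝ) < (n:ℝ) := by exact_mod_cast Nat.lt_of_lt_of_le Nat.zero_lt_one hn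
          positivity
        exact le_of_lt (div_pos (hpos n) h1)
      have := ge_of_tendsto h1n hnn
      linarith
    · exact h
  -- R.eval n / n ^ (d*r) → c ^ r
  have h3 : Tendsto (fun n : ℕ => R.eval (n:ℝ) / (n:ℝ) ^ ((d:ℝ) * r)) atTop (𝓝 (c ^ r)) := by
    have h30 : Tendsto (fun n : ℕ => (P.eval (n:ℝ) / (n:ℝ) ^ d) ^ r) atTop (𝓝 (c ^ r)) :=
      (h1n.rpow tendsto_const_nhds (Or.inl hcpos.ne'))
    apply h30.congr'
    filter_upwards [eventually_ge_atTop 1] with n hn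
    have hn0 : (0:ℝ) < (n:ℝ) := by exact_mod_cast Nat.lt_of_lt_of_le Nat.zero_lt_one hn
    rw [Real.div_rpow (hpos n).le (by positivity), hR n]
    congr 1
    rw [← Real.rpow_natCast (n:ℝ) d, ← Real.rpow_mul hn0.le]
  -- n ^ (e - d*r) converges
  have h5 : Tendsto (fun n : ℕ => (n:ℝ) ^ ((e:ℝ) - (d:ℝ) * r)) atTop (𝓝 (c ^ r / c')) := by
    have := h3.div h2n hc'0
    apply this.congr'
    filter_upwards [eventually_ge_atTop 1] with n hn
    have hn0 : (0:ℝ) < (n:ℝ) := by exact_mod_cast Nat.lt_of_lt_of_le Nat.zero_lt_one hn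
    have hRn : R.eval (n:ℝ) ≠ 0 := (hRpos n).ne'
    have hdr : (0:ℝ) < (n:ℝ) ^ ((d:ℝ)*r) := Real.rpow_pos_of_pos hn0 _
    have hne2 : (0:ℝ) < (n:ℝ) ^ (e:ℕ) := by positivity
    simp only [Pi.div_apply]
    rw [Real.rpow_sub hn0, Real.rpow_natCast]
    field_simp
    rw [← hee]
  by_contra hne
  have hne' : (e:ℝ) - (d:ℝ) * r ≠ 0 := fun h => hne (by linarith)
  rcases hne'.lt_or_gt with h | h
  · -- exponent negative : tendsto 0, so c^r/c' = 0, contradiction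
    have h6 : Tendsto (fun n : ℕ => (n:ℝ) ^ ((e:ℝ) - (d:ℝ) * r)) atTop (𝓝 0) := by
      have := tendsto_rpow_neg_atTop (y := -((e:ℝ) - (d:ℝ) * r)) (by linarith)
      simp only [neg_neg] at this
      exact this.comp tendsto_natCast_atTop_atTop
    have := tendsto_nhds_unique h5 h6
    have : c ^ r / c' ≠ 0 := div_ne_zero (Real.rpow_pos_of_pos hcpos r).ne' hc'0
    exact this (tendsto_nhds_unique h5 h6)
  · have h6 : Tendsto (fun n : ℕ => (n:ℝ) ^ ((e:ℝ) - (d:ℝ) * r)) atTop atTop :=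
      (tendsto_rpow_atTop h).comp tendsto_natCast_atTop_atTop
    exact (not_tendsto_nhds_of_tendsto_atTop h6 _) h5


variable {𝕜 X : Type*} [RCLike 𝕜] [NormedAddCommGroup X] [NormedSpace 𝕜 X]

lemma neg_one_pow_sub {k m : ℕ} (hkm : k ≤ m) : (-1:ℝ) ^ (m - k) = (-1) ^ m * (-1) ^ k := by
  have h1 : (-1:ℝ) ^ (m - k) * (-1) ^ k = (-1) ^ m := by
    rw [← pow_add, Nat.sub_add_cancel hkm]
  have h2 : (-1:ℝ) ^ k * (-1) ^ k = 1 := by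
    rw [← mul_pow]; norm_num
  calc (-1:ℝ) ^ (m - k) = (-1:ℝ) ^ (m-k) * ((-1:ℝ)^k * (-1)^k) := by rw [h2, mul_one]
    _ = ((-1:ℝ) ^ (m-k) * (-1)^k) * (-1)^k := by ring
    _ = (-1) ^ m * (-1) ^ k := by rw [h1]

lemma diff_eq (T : X →L[𝕜] X) (x : X) (p : ℝ) (m j : ℕ) :
    (fwdDiff (1:ℕ))^[m] (fun n : ℕ => ‖(T ^ n) x‖ ^ p) j
      = (-1 : ℝ) ^ m * ∑ k ∈ Finset.range (m + 1),
          (-1 : ℝ) ^ k * (m.choose k : ℝ) * ‖(T ^ k) ((T ^ j) x)‖ ^ p := by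
  rw [fwdDiff_iter_eq_sum_shift, Finset.mul_sum]
  apply Finset.sum_congr rfl
  intro k hk
  have hkm : k ≤ m := Nat.lt_succ_iff.mp (Finset.mem_range.mp hk)
  have h1 : (T ^ (j + k • 1)) x = (T ^ k) ((T ^ j) x) := by
    rw [smul_eq_mul, mul_one, add_comm, pow_add]
    rfl
  rw [zsmul_eq_mul, h1, Int.cast_mul, Int.cast_pow, Int.cast_neg, Int.cast_one,
    Int.cast_natCast, neg_one_pow_sub hkm]
  ring

variable {𝕜 X : Type*} [RCLike 𝕜] [NormedAddCommGroup X] [NormedSpace 𝕜 X]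

lemma iso_iff (T : X →L[𝕜] X) (m : ℕ) (p : ℝ) :
    IsMPIsometry T m p ↔
      ∀ x : X, ∀ j : ℕ, (fwdDiff (1:ℕ))^[m] (fun n : ℕ => ‖(T ^ n) x‖ ^ p) j = 0 := by
  constructor
  · intro h x j
    rw [diff_eq, h ((T ^ j) x), mul_zero]
  · intro h x
    have h0 := h x 0
    rw [diff_eq] at h0
    rcases mul_eq_zero.mp h0 with h1 | h1
    · exact absurd h1 (by positivity)
    · have : (T ^ (0:ℕ)) x = x := by rw [pow_zero]; rfl
      rw [this] at h1
      exact h1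

lemma iso_iff_repr {T : X →L[𝕜] X} {μ : ℕ} (hμ : 1 ≤ μ) (q : ℝ) :
    IsMPIsometry T μ q ↔
      ∀ x : X, ∃ P : ℝ[X], P.natDegree ≤ μ - 1 ∧ ∀ n : ℕ, ‖(T ^ n) x‖ ^ q = P.eval (n:ℝ) := by
  rw [iso_iff]
  constructor
  · intro h x
    exact exists_poly hμ (h x)
  · intro h x j
    obtain ⟨P, hP, hrepr⟩ := h x
    have he : (fun n : ℕ => ‖(T ^ n) x‖ ^ q) = fun n : ℕ => P.eval (n:ℝ) := funext hrepr
    rw [he]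
    exact diff_iter_eval_zero μ P (by omega) j

lemma norm_pos {T : X →L[𝕜] X} {μ : ℕ} {q : ℝ} (hT : IsMPIsometry T μ q) (hμ : 1 ≤ μ)
    (hq : 0 < q) {x : X} (hx : x ≠ 0) (n : ℕ) : 0 < ‖(T ^ n) x‖ := by
  have hinj : ∀ y : X, T y = 0 → y = 0 := by
    intro y hy
    obtain ⟨P, hdeg, hrepr⟩ := (iso_iff_repr hμ q).mp hT y
    have hzero : ∀ k : ℕ, P.eval ((k+1 : ℕ):ℝ) = 0 := by
      intro k
      have hTk : (T ^ (k+1)) y = 0 := by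
        rw [pow_succ, ContinuousLinearMap.mul_apply, hy, map_zero]
      rw [← hrepr (k+1), hTk, norm_zero, Real.zero_rpow hq.ne']
    have hP0 : P = 0 := by
      apply Polynomial.eq_of_infinite_eval_eq
      apply Set.Infinite.mono (s := Set.range (fun k : ℕ => ((k+1 : ℕ) : ℝ)))
      · rintro _ ⟨k, rfl⟩
        simp only [Set.mem_setOf_eq, eval_zero]
        exact hzero k
      · exact Set.infinite_range_of_injective (by
          intro a b hab
          have : (a : ℝ) + 1 = (b : ℝ) + 1 := by push_cast at hab ⊢; linarith [hab]
          exact_mod_cast (by linarith : (a:ℝ) = b))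
    have hy0 : ‖y‖ ^ q = 0 := by
      have := hrepr 0
      rw [hP0] at this
      simpa using this
    have : ‖y‖ = 0 := by
      by_contra hne
      have : 0 < ‖y‖ := lt_of_le_of_ne (norm_nonneg y) (Ne.symm hne)
      exact absurd hy0 (Real.rpow_pos_of_pos this q).ne'
    exact norm_eq_zero.mp this
  have hTn : ∀ n : ℕ, (T ^ n) x ≠ 0 := by
    intro n
    induction n with
    | zero => simpa using hx
    | succ n IH =>
      intro hcon
      rw [pow_succ', ContinuousLinearMap.mul_apply] at hcon
      exact IH (hinj _ hcon)
  exact norm_pos_iff.mpr (hTn n)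

/-- Strict representation: every orbit-norm sequence is polynomial of degree `≤ l`, and some
orbit achieves degree exactly `l`. -/
def SR (T : X →L[𝕜] X) (l : ℕ) (q : ℝ) : Prop :=
  (∀ x : X, ∃ P : ℝ[X], P.natDegree ≤ l ∧ ∀ n : ℕ, ‖(T ^ n) x‖ ^ q = P.eval (n:ℝ)) ∧
  ∃ x : X, ∃ P : ℝ[X], P.natDegree = l ∧ ∀ n : ℕ, ‖(T ^ n) x‖ ^ q = P.eval (n:ℝ)

lemma strict_iff {T : X →L[𝕜] X} {μ : ℕ} (hμ : 2 ≤ μ) (q : ℝ) :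
    IsStrictMPIsometry T μ q ↔ SR T (μ - 1) q := by
  unfold IsStrictMPIsometry
  rw [iso_iff_repr (by omega : 1 ≤ μ) q]
  constructor
  · rintro ⟨h1, h2⟩
    refine ⟨h1, ?_⟩
    have h2' := h2 hμ
    rw [iso_iff_repr (by omega : 1 ≤ μ - 1) q] at h2'
    obtain ⟨x, hx⟩ := not_forall.mp h2'
    obtain ⟨P, hP, hrepr⟩ := h1 x
    refine ⟨x, P, ?_, hrepr⟩
    have : ¬ (P.natDegree ≤ μ - 1 - 1) := fun hle => hx ⟨P, hle, hrepr⟩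
    omega
  · rintro ⟨h1, x, P, hdeg, hrepr⟩
    refine ⟨h1, fun _ hcon => ?_⟩
    rw [iso_iff_repr (by omega : 1 ≤ μ - 1) q] at hcon
    obtain ⟨Q, hQ, hQr⟩ := hcon x
    have hPQ : P = Q := poly_unique (fun n => (hrepr n).symm.trans (hQr n))
    rw [hPQ] at hdeg
    omega

lemma ne_zero_of_deg {T : X →L[𝕜] X} {x : X} {P : ℝ[X]} {r : ℝ} (hr : 0 < r)
    (h : ∀ n : ℕ, ‖(T ^ n) x‖ ^ r = P.eval (n:ℝ)) (hd : P.natDegree ≠ 0) : x ≠ 0 := by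
  rintro rfl
  have hP : P = 0 := by
    apply poly_unique (Q := 0)
    intro n
    rw [← h n]
    simp [Real.zero_rpow hr.ne']
  rw [hP] at hd
  simp at hd

lemma ratio {T : X →L[𝕜] X} {a : ℕ} (ha : 1 ≤ a) {p : ℝ} (hp : 0 < p) (hSa : SR T a p)
    {μ : ℕ} (hμ : 1 ≤ μ) {q : ℝ} (hq : 0 < q) (hs : IsStrictMPIsometry T μ q) :
    2 ≤ μ ∧ ((μ - 1 : ℕ) : ℝ) * p = (a : ℝ) * q := by
  have hiso_p : IsMPIsometry T (a+1) p := by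
    rw [iso_iff_repr (by omega : 1 ≤ a + 1) p]
    simpa using hSa.1
  have hrp : 0 < q / p := div_pos hq hp
  have hpq : p * (q / p) = q := by field_simp
  obtain ⟨x₀, P, hdP, hPr⟩ := hSa.2
  have hx₀ : x₀ ≠ 0 := ne_zero_of_deg hp hPr (by omega)
  have hPpos : ∀ n : ℕ, 0 < P.eval (n:ℝ) := fun n => by
    rw [← hPr n]
    exact Real.rpow_pos_of_pos (norm_pos hiso_p (by omega) hp hx₀ n) p
  obtain ⟨R, hdR, hRr⟩ := (iso_iff_repr hμ q).mp hs.1 x₀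
  have hReval : ∀ n : ℕ, R.eval (n:ℝ) = (P.eval (n:ℝ)) ^ (q / p) := by
    intro n
    rw [← hRr n, ← hPr n, ← Real.rpow_mul (norm_nonneg _), hpq]
  have hdeg1 : (R.natDegree : ℝ) = (q/p) * a :=
    hdP ▸ rpow_degree hrp (by omega) hPpos hReval
  have hR1 : 1 ≤ R.natDegree := by
    by_contra hcon
    have h0 : R.natDegree = 0 := by omega
    rw [h0] at hdeg1
    have : (0:ℝ) < (q/p) * a := by
      apply mul_pos hrp
      exact_mod_cast (by omega : 0 < a)
    simp only [Nat.cast_zero] at hdeg1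
    linarith
  have hμ2 : 2 ≤ μ := by omega
  refine ⟨hμ2, ?_⟩
  have hSμ := (strict_iff hμ2 q).mp hs
  obtain ⟨y, Qy, hdQy, hQyr⟩ := hSμ.2
  have hy : y ≠ 0 := ne_zero_of_deg hq hQyr (by omega)
  obtain ⟨Py, hdPy, hPyr⟩ := hSa.1 y
  have hPypos : ∀ n : ℕ, 0 < Py.eval (n:ℝ) := fun n => by
    rw [← hPyr n]
    exact Real.rpow_pos_of_pos (norm_pos hiso_p (by omega) hp hy n) p
  have hQyeval : ∀ n : ℕ, Qy.eval (n:ℝ) = (Py.eval (n:ℝ)) ^ (q / p) := by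
    intro n
    rw [← hQyr n, ← hPyr n, ← Real.rpow_mul (norm_nonneg _), hpq]
  by_cases hdy : Py.natDegree = 0
  · exfalso
    obtain ⟨b, rfl⟩ := natDegree_eq_zero.mp hdy
    have : Qy = C (b ^ (q/p)) := by
      apply poly_unique
      intro n
      rw [hQyeval n]
      simp
    rw [this] at hdQy
    simp at hdQy
    omega
  · have hdeg2 : (Qy.natDegree : ℝ) = (q/p) * Py.natDegree :=
      rpow_degree hrp (by omega) hPypos hQyeval
    have hle1 : ((μ - 1 : ℕ) : ℝ) ≤ (q/p) * a := by
      rw [← hdQy, hdeg2]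
      apply mul_le_mul_of_nonneg_left _ hrp.le
      exact_mod_cast hdPy
    have hle2 : (q/p) * a ≤ ((μ - 1 : ℕ) : ℝ) := by
      rw [← hdeg1]
      exact_mod_cast hdR
    have heq : ((μ - 1 : ℕ) : ℝ) = (q/p) * a := le_antisymm hle1 hle2
    rw [heq]
    field_simp

lemma SR_mul {T : X →L[𝕜] X} {l : ℕ} {q : ℝ} (hq : 0 < q) (h : SR T l q) (k : ℕ) (hk : 1 ≤ k) :
    SR T (k * l) ((k:ℝ) * q) := by
  have key : ∀ (x : X) (Q : ℝ[X]), (∀ n : ℕ, ‖(T ^ n) x‖ ^ q = Q.eval (n:ℝ)) →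
      ∀ n : ℕ, ‖(T ^ n) x‖ ^ ((k:ℝ) * q) = (Q ^ k).eval (n:ℝ) := by
    intro x Q hQ n
    rw [eval_pow, ← hQ n, mul_comm (k:ℝ) q, Real.rpow_mul (norm_nonneg _),
      Real.rpow_natCast]
  constructor
  · intro x
    obtain ⟨Q, hd, hr⟩ := h.1 x
    exact ⟨Q ^ k, by rw [natDegree_pow]; exact Nat.mul_le_mul_left k hd, key x Q hr⟩
  · obtain ⟨x, Q, hd, hr⟩ := h.2
    exact ⟨x, Q ^ k, by rw [natDegree_pow, hd], key x Q hr⟩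

lemma SR_sub {T : X →L[𝕜] X} {a : ℕ} (ha : 1 ≤ a) {p : ℝ} (hp : 0 < p) (hSa : SR T a p)
    {l₁ l₂ : ℕ} {q₁ q₂ : ℝ} (h1 : SR T l₁ q₁) (h2 : SR T l₂ q₂)
    (hl1 : 1 ≤ l₁) (hl : l₁ < l₂) (hq1 : 0 < q₁) (hq2 : 0 < q₂)
    (he1 : (a:ℝ) * q₁ = (l₁:ℝ) * p) (he2 : (a:ℝ) * q₂ = (l₂:ℝ) * p) :
    SR T (l₂ - l₁) (q₂ - q₁) := by
  have hiso_p : IsMPIsometry T (a+1) p := by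
    rw [iso_iff_repr (by omega : 1 ≤ a + 1) p]
    simpa using hSa.1
  have ha0 : (0:ℝ) < (a:ℝ) := by exact_mod_cast (by omega : 0 < a)
  have hq21 : q₁ < q₂ := by
    have hlt : (l₁:ℝ) * p < (l₂:ℝ) * p := by
      apply mul_lt_mul_of_pos_right _ hp
      exact_mod_cast hl
    nlinarith
  have key : ∀ x : X, x ≠ 0 → ∀ P Q₁ Q₂ : ℝ[X],
      (∀ n : ℕ, ‖(T ^ n) x‖ ^ p = P.eval (n:ℝ)) →
      (∀ n : ℕ, ‖(T ^ n) x‖ ^ q₁ = Q₁.eval (n:ℝ)) →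
      (∀ n : ℕ, ‖(T ^ n) x‖ ^ q₂ = Q₂.eval (n:ℝ)) →
      ∃ R : ℝ[X], a * R.natDegree = (l₂ - l₁) * P.natDegree ∧
        ∀ n : ℕ, ‖(T ^ n) x‖ ^ (q₂ - q₁) = R.eval (n:ℝ) := by
    intro x hx P Q₁ Q₂ hP hQ1 hQ2
    have hnorm : ∀ n : ℕ, 0 < ‖(T ^ n) x‖ := norm_pos hiso_p (by omega) hp hx
    have hpowid : ∀ (b : ℝ) (hb : 0 < b) (s t : ℝ) (u v : ℕ), s * u = t * v →
        (b ^ s) ^ u = (b ^ t) ^ v := by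
      intro b hb s t u v he
      rw [← Real.rpow_natCast (b ^ s) u, ← Real.rpow_natCast (b ^ t) v,
        ← Real.rpow_mul hb.le, ← Real.rpow_mul hb.le, he]
    have hid1 : Q₁ ^ a = P ^ l₁ := by
      apply poly_unique
      intro n
      rw [eval_pow, eval_pow, ← hQ1 n, ← hP n]
      apply hpowid _ (hnorm n)
      rw [mul_comm q₁ (a:ℝ)] at *
      linarith [he1]
    have hid2 : Q₂ ^ a = P ^ l₂ := by
      apply poly_unique
      intro n
      rw [eval_pow, eval_pow, ← hQ2 n, ← hP n]
      apply hpowid _ (hnorm n)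
      linarith [he2, mul_comm q₂ (a:ℝ)]
    have hQ1ne : Q₁ ≠ 0 := by
      intro h
      have h0 := hQ1 0
      rw [h] at h0
      simp only [eval_zero] at h0
      exact (Real.rpow_pos_of_pos (hnorm 0) q₁).ne' h0
    have hQ2ne : Q₂ ≠ 0 := by
      intro h
      have h0 := hQ2 0
      rw [h] at h0
      simp only [eval_zero] at h0
      exact (Real.rpow_pos_of_pos (hnorm 0) q₂).ne' h0
    have hdvd : Q₁ ∣ Q₂ := by
      have h5 : Q₁ ^ (a * l₂) = Q₂ ^ (a * l₁) := by
        rw [pow_mul, hid1, ← pow_mul, mul_comm l₁ l₂, pow_mul, ← hid2, ← pow_mul]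
      have hdvdpow : Q₁ ^ (a * l₁) ∣ Q₂ ^ (a * l₁) := by
        rw [← h5]
        exact pow_dvd_pow Q₁ (Nat.mul_le_mul_left a hl.le)
      exact (IsIntegrallyClosed.pow_dvd_pow_iff (by positivity : a * l₁ ≠ 0)).mp hdvdpow
    obtain ⟨R, hR⟩ := hdvd
    have hRrepr : ∀ n : ℕ, ‖(T ^ n) x‖ ^ (q₂ - q₁) = R.eval (n:ℝ) := by
      intro n
      have h6 : Q₁.eval (n:ℝ) ≠ 0 := by
        rw [← hQ1 n]
        exact (Real.rpow_pos_of_pos (hnorm n) q₁).ne'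
      have h7 : ‖(T ^ n) x‖ ^ (q₂ - q₁) = Q₂.eval (n:ℝ) / Q₁.eval (n:ℝ) := by
        rw [← hQ1 n, ← hQ2 n, Real.rpow_sub (hnorm n)]
      rw [h7, hR, eval_mul]
      field_simp
    refine ⟨R, ?_, hRrepr⟩
    have hRne : R ≠ 0 := by
      rintro rfl
      rw [mul_zero] at hR
      exact hQ2ne hR
    have hd1 : a * Q₁.natDegree = l₁ * P.natDegree := by
      have := congrArg natDegree hid1
      rwa [natDegree_pow, natDegree_pow] at this
    have hd2 : a * Q₂.natDegree = l₂ * P.natDegree := by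
      have := congrArg natDegree hid2
      rwa [natDegree_pow, natDegree_pow] at this
    have hd3 : Q₂.natDegree = Q₁.natDegree + R.natDegree := by
      rw [hR, natDegree_mul hQ1ne hRne]
    have key2 : a * R.natDegree + l₁ * P.natDegree = l₂ * P.natDegree := by
      rw [← hd1, ← hd2, hd3, Nat.mul_add]
      ring
    rw [Nat.sub_mul]
    omega
  constructor
  · intro x
    by_cases hx : x = 0
    · refine ⟨0, by simp, ?_⟩
      intro n
      rw [hx]
      simp [Real.zero_rpow (by linarith : q₂ - q₁ ≠ 0)]
    · obtain ⟨P, hdp, hPr⟩ := hSa.1 x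
      obtain ⟨Q₁, _, hQ1r⟩ := h1.1 x
      obtain ⟨Q₂, _, hQ2r⟩ := h2.1 x
      obtain ⟨R, hdR, hRr⟩ := key x hx P Q₁ Q₂ hPr hQ1r hQ2r
      refine ⟨R, ?_, hRr⟩
      have : a * R.natDegree ≤ a * (l₂ - l₁) := by
        rw [hdR, mul_comm a (l₂ - l₁)]
        exact Nat.mul_le_mul_left (l₂ - l₁) hdp
      exact Nat.le_of_mul_le_mul_left this (by omega)
  · obtain ⟨x₀, P₀, hdP₀, hP₀r⟩ := hSa.2
    have hx₀ : x₀ ≠ 0 := ne_zero_of_deg hp hP₀r (by omega)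
    obtain ⟨Q₁, _, hQ1r⟩ := h1.1 x₀
    obtain ⟨Q₂, _, hQ2r⟩ := h2.1 x₀
    obtain ⟨R, hdR, hRr⟩ := key x₀ hx₀ P₀ Q₁ Q₂ hP₀r hQ1r hQ2r
    refine ⟨x₀, R, ?_, hRr⟩
    rw [hdP₀, mul_comm (l₂ - l₁) a] at hdR
    exact Nat.eq_of_mul_eq_mul_left (by omega) hdR

end StrictIsoAux

theorem stmt_13 {𝕜 X : Type*} [RCLike 𝕜] [NormedAddCommGroup X] [NormedSpace 𝕜 X]
    [CompleteSpace X] (T : X →L[𝕜] X) (m : ℕ) (hm : 1 < m) (p : ℝ) (hp : 0 < p)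
    (hT : IsStrictMPIsometry T m p) :
    ∃ (m₀ : ℕ) (p₀ : ℝ), 1 < m₀ ∧ 0 < p₀ ∧
      ∀ μ : ℕ, 1 ≤ μ → ∀ q : ℝ, 0 < q →
        (IsStrictMPIsometry T μ q ↔
          ∃ k : ℕ, 1 ≤ k ∧ μ = k * (m₀ - 1) + 1 ∧ q = (k : ℝ) * p₀) := by
  classical
  open StrictIsoAux in
  set a := m - 1 with haa
  have ha : 1 ≤ a := by omega
  have ha0 : (0:ℝ) < (a:ℝ) := by exact_mod_cast (by omega : 0 < a)
  have hm2 : 2 ≤ m := hm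
  have hSa : SR T a p := (strict_iff hm2 p).mp hT
  set S : ℕ → Prop := fun l => 1 ≤ l ∧ SR T l ((l:ℝ) * p / a) with hS
  have haS : S a := by
    refine ⟨ha, ?_⟩
    have : (a:ℝ) * p / a = p := by field_simp
    rw [this]
    exact hSa
  have hex : ∃ l, S l := ⟨a, haS⟩
  set l₀ := Nat.find hex with hl₀
  have hl₀S : S l₀ := Nat.find_spec hex
  have hl₀1 : 1 ≤ l₀ := hl₀S.1
  have hqlpos : ∀ l : ℕ, 1 ≤ l → (0:ℝ) < (l:ℝ) * p / a := by
    intro l hl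
    have : (0:ℝ) < (l:ℝ) := by exact_mod_cast (by omega : 0 < l)
    positivity
  have hmulS : ∀ l, S l → ∀ k, 1 ≤ k → S (k * l) := by
    intro l hl k hk
    refine ⟨Nat.one_le_iff_ne_zero.mpr (Nat.mul_ne_zero (by omega) (by omega)), ?_⟩
    have h := SR_mul (hqlpos l hl.1) hl.2 k hk
    have he : ((k * l : ℕ):ℝ) * p / a = (k:ℝ) * ((l:ℝ) * p / a) := by
      push_cast
      ring
    rw [he]
    exact h
  have hsubS : ∀ l₁, S l₁ → ∀ l₂, S l₂ → l₁ < l₂ → S (l₂ - l₁) := by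
    intro l₁ hh1 l₂ hh2 hlt
    refine ⟨by omega, ?_⟩
    have he1 : (a:ℝ) * ((l₁:ℝ) * p / a) = (l₁:ℝ) * p := by field_simp
    have he2 : (a:ℝ) * ((l₂:ℝ) * p / a) = (l₂:ℝ) * p := by field_simp
    have h := SR_sub ha hp hSa hh1.2 hh2.2 hh1.1 hlt (hqlpos l₁ hh1.1) (hqlpos l₂ hh2.1) he1 he2
    have he : ((l₂ - l₁ : ℕ):ℝ) * p / a = (l₂:ℝ) * p / a - (l₁:ℝ) * p / a := by
      rw [Nat.cast_sub hlt.le]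
      ring
    rw [he]
    have he' : (l₂:ℝ) * p / a - (l₁:ℝ) * p / a
        = ((l₂:ℝ) * p / a) - ((l₁:ℝ) * p / a) := rfl
    convert h using 2 <;> ring
  have hdvd : ∀ l, S l → l₀ ∣ l := by
    intro l
    induction l using Nat.strong_induction_on with
    | _ l IH =>
      intro hlS
      rcases lt_trichotomy l l₀ with h | h | h
      · exact absurd hlS (Nat.find_min hex h)
      · exact h ▸ dvd_refl l₀
      · have hsub : S (l - l₀) := hsubS l₀ hl₀S l hlS h
        have hd := IH (l - l₀) (by omega) hsub
        have : l₀ ∣ (l - l₀) + l₀ := Nat.dvd_add hd dvd_rfl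
        rwa [Nat.sub_add_cancel h.le] at this
  refine ⟨l₀ + 1, (l₀:ℝ) * p / a, by omega, hqlpos l₀ hl₀1, ?_⟩
  intro μ hμ q hq
  simp only [Nat.add_sub_cancel]
  constructor
  · intro hs
    obtain ⟨hμ2, heq⟩ := ratio ha hp hSa hμ hq hs
    have hqe : q = ((μ - 1 : ℕ):ℝ) * p / a := by
      rw [eq_div_iff ha0.ne']
      linarith
    have hlS : S (μ - 1) := by
      refine ⟨by omega, ?_⟩
      rw [← hqe]
      exact (strict_iff hμ2 q).mp hs
    obtain ⟨k, hk⟩ := hdvd _ hlS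
    have hk1 : 1 ≤ k := by
      rcases Nat.eq_zero_or_pos k with h0 | h0
      · rw [h0, mul_zero] at hk
        omega
      · exact h0
    refine ⟨k, hk1, ?_, ?_⟩
    · rw [mul_comm, ← hk, Nat.sub_add_cancel (by omega)]
    · rw [hqe, hk]
      push_cast
      ring
  · rintro ⟨k, hk1, hμe, hqe⟩
    have hklS : S (k * l₀) := hmulS l₀ hl₀S k hk1
    have hSR : SR T (μ - 1) q := by
      have h := hklS.2
      have hμ1 : μ - 1 = k * l₀ := by
        rw [hμe, Nat.add_sub_cancel]
      have hqq : q = ((k * l₀ : ℕ):ℝ) * p / a := by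
        rw [hqe]
        push_cast
        ring
      rw [hμ1, hqq]
      exact h
    exact (strict_iff (by omega : 2 ≤ μ) q).mpr hSR
end

section
/- Let a = (a_k)_{k∈ℕ} be a real sequence and m ≥ 1 an integer. Then the following are equivalent: (i) for every ℓ ∈ ℕ, max{a_k : ℓ ≤ k ≤ m+ℓ, k even} = max{a_k : ℓ ≤ k ≤ m+ℓ, k odd}; (ii) the sequence a attains a maximum value, and for every ℓ ∈ ℕ, max_{k ∈ ℕ} a_k = max{a_k : ℓ ≤ k ≤ m-1+ℓ and k ≡ m-1+ℓ (mod 2)}. -/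
private lemma aux_fin (a : ℕ → ℝ) (P : ℕ → Prop) (lo hi : ℕ) :
    {r : ℝ | ∃ k : ℕ, lo ≤ k ∧ k ≤ hi ∧ P k ∧ r = a k}.Finite := by
  apply Set.Finite.subset ((Set.finite_Icc lo hi).image a)
  rintro r ⟨k, h1, h2, _, rfl⟩
  exact ⟨k, ⟨h1, h2⟩, rfl⟩

private lemma aux_le (a : ℕ → ℝ) (P : ℕ → Prop) (lo hi k : ℕ)
    (h1 : lo ≤ k) (h2 : k ≤ hi) (h3 : P k) :
    a k ≤ sSup {r : ℝ | ∃ k : ℕ, lo ≤ k ∧ k ≤ hi ∧ P k ∧ r = a k} :=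
  le_csSup (aux_fin a P lo hi).bddAbove ⟨k, h1, h2, h3, rfl⟩

private lemma aux_mem (a : ℕ → ℝ) (P : ℕ → Prop) (lo hi k0 : ℕ)
    (h1 : lo ≤ k0) (h2 : k0 ≤ hi) (h3 : P k0) :
    ∃ k : ℕ, lo ≤ k ∧ k ≤ hi ∧ P k ∧
      sSup {r : ℝ | ∃ k : ℕ, lo ≤ k ∧ k ≤ hi ∧ P k ∧ r = a k} = a k := by
  have hne : Set.Nonempty {r : ℝ | ∃ k : ℕ, lo ≤ k ∧ k ≤ hi ∧ P k ∧ r = a k} :=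
    ⟨a k0, k0, h1, h2, h3, rfl⟩
  exact Set.Nonempty.csSup_mem hne (aux_fin a P lo hi)

/-- for a real sequence `a` and `m ≥ 1`, the following are equivalent:
(i) for every `ℓ`, the maximum of `a k` over even `k ∈ [ℓ, m+ℓ]` equals the maximum of
`a k` over odd `k ∈ [ℓ, m+ℓ]`;
(ii) `a` attains a maximum over `ℕ`, and for every `ℓ` this maximum equals the maximum of
`a k` over those `k ∈ [ℓ, m-1+ℓ]` with `k ≡ m-1+ℓ (mod 2)`.
(The maxima of the finite nonempty index sets are expressed via `sSup`.) -/
theorem stmt_15 (a : ℕ → ℝ) (m : ℕ) (hm : 1 ≤ m) :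
    (∀ ℓ : ℕ,
        sSup {r : ℝ | ∃ k : ℕ, ℓ ≤ k ∧ k ≤ m + ℓ ∧ Even k ∧ r = a k} =
        sSup {r : ℝ | ∃ k : ℕ, ℓ ≤ k ∧ k ≤ m + ℓ ∧ Odd k ∧ r = a k}) ↔
    (∃ N : ℕ, (∀ k : ℕ, a k ≤ a N) ∧
        ∀ ℓ : ℕ, a N =
          sSup {r : ℝ | ∃ k : ℕ, ℓ ≤ k ∧ k ≤ m - 1 + ℓ ∧ k % 2 = (m - 1 + ℓ) % 2 ∧ r = a k}) := by
  constructor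
  · -- (i) → (ii)
    intro h
    set W : ℕ → ℝ := fun ℓ => sSup {r : ℝ | ∃ k : ℕ, ℓ ≤ k ∧ k ≤ m + ℓ ∧ Even k ∧ r = a k}
      with hW
    -- every k in window ℓ satisfies a k ≤ W ℓ
    have hbound : ∀ ℓ k : ℕ, ℓ ≤ k → k ≤ m + ℓ → a k ≤ W ℓ := by
      intro ℓ k h1 h2
      rcases Nat.even_or_odd k with hk | hk
      · exact aux_le a Even ℓ (m + ℓ) k h1 h2 hk
      · rw [hW]; simp only []
        rw [h ℓ]
        exact aux_le a Odd ℓ (m + ℓ) k h1 h2 hk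
    -- W attained at an index of each parity
    have hevenmem : ∀ ℓ : ℕ, ∃ k, ℓ ≤ k ∧ k ≤ m + ℓ ∧ Even k ∧ W ℓ = a k := by
      intro ℓ
      rcases Nat.even_or_odd ℓ with hℓ | hℓ
      · exact aux_mem a Even ℓ (m + ℓ) ℓ le_rfl (by omega) hℓ
      · refine aux_mem a Even ℓ (m + ℓ) (ℓ + 1) (by omega) (by omega) ?_
        exact Odd.add_one hℓ
    have hoddmem : ∀ ℓ : ℕ, ∃ k, ℓ ≤ k ∧ k ≤ m + ℓ ∧ Odd k ∧ W ℓ = a k := by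
      intro ℓ
      have := h ℓ
      rcases Nat.even_or_odd ℓ with hℓ | hℓ
      · have := aux_mem a Odd ℓ (m + ℓ) (ℓ + 1) (by omega) (by omega) (Even.add_one hℓ)
        rw [← h ℓ] at this; exact this
      · have := aux_mem a Odd ℓ (m + ℓ) ℓ le_rfl (by omega) hℓ
        rw [← h ℓ] at this; exact this
    -- W is constant
    have hstep : ∀ ℓ : ℕ, W (ℓ + 1) = W ℓ := by
      intro ℓ
      apply le_antisymm
      · -- attained at index of parity ≠ m+ℓ+1, hence ≤ m+ℓ
        rcases Nat.even_or_odd (m + ℓ + 1) with hp | hp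
        · obtain ⟨k, h1, h2, hk, he⟩ := hoddmem (ℓ + 1)
          have hkne : k ≠ m + ℓ + 1 := by
            rintro rfl
            have := Nat.even_iff.mp hp; have := Nat.odd_iff.mp hk; omega
          rw [he]; exact hbound ℓ k (by omega) (by omega)
        · obtain ⟨k, h1, h2, hk, he⟩ := hevenmem (ℓ + 1)
          have hkne : k ≠ m + ℓ + 1 := by
            rintro rfl
            have := Nat.even_iff.mp hk; have := Nat.odd_iff.mp hp; omega
          rw [he]; exact hbound ℓ k (by omega) (by omega)
      · -- attained at index of parity ≠ ℓ, hence ≥ ℓ+1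
        rcases Nat.even_or_odd ℓ with hp | hp
        · obtain ⟨k, h1, h2, hk, he⟩ := hoddmem ℓ
          have hkne : k ≠ ℓ := by
            rintro rfl
            have := Nat.even_iff.mp hp; have := Nat.odd_iff.mp hk; omega
          rw [he]; exact hbound (ℓ + 1) k (by omega) (by omega)
        · obtain ⟨k, h1, h2, hk, he⟩ := hevenmem ℓ
          have hkne : k ≠ ℓ := by
            rintro rfl
            have := Nat.even_iff.mp hk; have := Nat.odd_iff.mp hp; omega
          rw [he]; exact hbound (ℓ + 1) k (by omega) (by omega)
    have hconst : ∀ ℓ : ℕ, W ℓ = W 0 := by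
      intro ℓ; induction ℓ with
      | zero => rfl
      | succ n ih => rw [hstep n, ih]
    -- global bound
    have hglob : ∀ k : ℕ, a k ≤ W 0 := by
      intro k
      calc a k ≤ W k := hbound k k le_rfl (by omega)
        _ = W 0 := hconst k
    obtain ⟨N, _, _, _, hN⟩ := hevenmem 0
    refine ⟨N, fun k => hN ▸ hglob k, ?_⟩
    intro ℓ
    -- find index of the right parity attaining the max in [ℓ, m-1+ℓ]
    have key : ∃ k, ℓ ≤ k ∧ k ≤ m - 1 + ℓ ∧ k % 2 = (m - 1 + ℓ) % 2 ∧ a k = W 0 := by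
      rcases Nat.even_or_odd (m - 1 + ℓ) with hp | hp
      · obtain ⟨k, h1, h2, hk, he⟩ := hevenmem ℓ
        have hkne : k ≠ m + ℓ := by
          rintro rfl
          have : Odd (m + ℓ) := by
            rcases hp with ⟨t, ht⟩; exact ⟨t, by omega⟩
          have h5 := Nat.odd_iff.mp this; have := Nat.even_iff.mp hk; omega
        refine ⟨k, h1, by omega, ?_, by rw [← he, hconst ℓ]⟩
        rw [Nat.even_iff] at hk hp; omega
      · obtain ⟨k, h1, h2, hk, he⟩ := hoddmem ℓ
        have hkne : k ≠ m + ℓ := by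
          rintro rfl
          have : Even (m + ℓ) := by
            rcases hp with ⟨t, ht⟩; exact ⟨t + 1, by omega⟩
          have h5 := Nat.even_iff.mp this; have := Nat.odd_iff.mp hk; omega
        refine ⟨k, h1, by omega, ?_, by rw [← he, hconst ℓ]⟩
        rw [Nat.odd_iff] at hk hp; omega
    obtain ⟨k, h1, h2, h3, h4⟩ := key
    apply le_antisymm
    · rw [← hN]
      calc W 0 = a k := h4.symm
        _ ≤ _ := aux_le a (fun k => k % 2 = (m - 1 + ℓ) % 2) ℓ (m - 1 + ℓ) k h1 h2 h3
    · have hne : Set.Nonempty {r : ℝ | ∃ k : ℕ, ℓ ≤ k ∧ k ≤ m - 1 + ℓ ∧ k % 2 = (m - 1 + ℓ) % 2 ∧ r = a k} :=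
        ⟨a k, k, h1, h2, h3, rfl⟩
      apply csSup_le hne
      rintro r ⟨j, _, _, _, rfl⟩
      exact hN ▸ hglob j
  · -- (ii) → (i)
    rintro ⟨N, hNmax, hN⟩ ℓ
    have hub : ∀ lo hi : ℕ, ∀ P : ℕ → Prop, ∀ k0, lo ≤ k0 → k0 ≤ hi → P k0 →
        sSup {r : ℝ | ∃ k : ℕ, lo ≤ k ∧ k ≤ hi ∧ P k ∧ r = a k} ≤ a N := by
      intro lo hi P k0 h1 h2 h3
      have hne : Set.Nonempty {r : ℝ | ∃ k : ℕ, lo ≤ k ∧ k ≤ hi ∧ P k ∧ r = a k} :=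
        ⟨a k0, k0, h1, h2, h3, rfl⟩
      apply csSup_le hne
      rintro r ⟨j, _, _, _, rfl⟩
      exact hNmax j
    -- for each parity p, there is k in [ℓ, m+ℓ] with k % 2 = p and a k = a N
    have key : ∀ p : ℕ, p < 2 → ∃ k, ℓ ≤ k ∧ k ≤ m + ℓ ∧ k % 2 = p ∧ a N = a k := by
      intro p hp
      -- choose ℓ' ∈ {ℓ, ℓ+1} with (m-1+ℓ') % 2 = p
      have : ∃ ℓ' : ℕ, ℓ ≤ ℓ' ∧ ℓ' ≤ ℓ + 1 ∧ (m - 1 + ℓ') % 2 = p := by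
        rcases eq_or_ne ((m - 1 + ℓ) % 2) p with he | he
        · exact ⟨ℓ, le_rfl, by omega, he⟩
        · exact ⟨ℓ + 1, by omega, le_rfl, by omega⟩
      obtain ⟨ℓ', hℓ'1, hℓ'2, hℓ'3⟩ := this
      obtain ⟨k, h1, h2, h3, h4⟩ := aux_mem a (fun k => k % 2 = (m - 1 + ℓ') % 2)
        ℓ' (m - 1 + ℓ') (m - 1 + ℓ') (by omega) le_rfl rfl
      rw [← hN ℓ'] at h4
      exact ⟨k, by omega, by omega, by omega, h4⟩
    obtain ⟨ke, hke1, hke2, hke3, hke4⟩ := key 0 (by omega)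
    obtain ⟨ko, hko1, hko2, hko3, hko4⟩ := key 1 (by omega)
    apply le_antisymm
    · apply le_trans (hub ℓ (m + ℓ) Even ke hke1 hke2 (Nat.even_iff.mpr hke3))
      rw [hko4]
      exact aux_le a Odd ℓ (m + ℓ) ko hko1 hko2 (Nat.odd_iff.mpr hko3)
    · apply le_trans (hub ℓ (m + ℓ) Odd ko hko1 hko2 (Nat.odd_iff.mpr hko3))
      rw [hke4]
      exact aux_le a Even ℓ (m + ℓ) ke hke1 hke2 (Nat.even_iff.mpr hke3)
end
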